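/- arXiv:1903.07236 — 12 statements merged into one kernel-verified Lean document; each statement's English description precedes it below -/
import Mathlib

section
/- Let P ⊆ ℝ^N be a closed set with 0 ∈ P, let A ∈ ℝ^{m×N} have all columns nonzero, and let K ∈ ℕ. Let 0 ≠ u ∈ Σ_K ∩ P and let 𝒥 ⊆ supp(u) be an index set. Suppose v is an optimal solution of min_w ‖A(u − w)‖₂² subject to w ∈ P and supp(w) ⊆ 𝒥. Then f*_j(u,v) = ‖A(u − v)‖₂² for every j ∈ 𝒥, and f*_j(u,v) ≤ ‖A(u − v)‖₂² for every j ∉ 𝒥. -/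
open Matrix Set

/-- `f*_j(u,v) = min_{t ∈ 𝕀_j(v)} ‖A(u−v) − t A_{•j}‖₂²`, where
`𝕀_j(v) = {t : v + t eⱼ ∈ P}`; formalized via the infimum (attained under
the standing assumptions). -/
noncomputable def fstar {N m : ℕ} (A : Matrix (Fin m) (Fin N) ℝ) (P : Set (Fin N → ℝ))
    (u v : Fin N → ℝ) (j : Fin N) : ℝ :=
  sInf ((fun t : ℝ => ∑ i, (A.mulVec (u - v) i - t * A i j) ^ 2) ''
    {t : ℝ | v + t • (Pi.single j (1 : ℝ) : Fin N → ℝ) ∈ P})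

lemma mulVec_shift {N m : ℕ} (A : Matrix (Fin m) (Fin N) ℝ)
    (u v : Fin N → ℝ) (j : Fin N) (t : ℝ) (i : Fin m) :
    A.mulVec (u - (v + t • (Pi.single j (1 : ℝ) : Fin N → ℝ))) i
      = A.mulVec (u - v) i - t * A i j := by
  simp only [Matrix.mulVec, dotProduct, Pi.sub_apply, Pi.add_apply, Pi.smul_apply,
    smul_eq_mul]
  have h : ∀ k, A i k * (u k - (v k + t * (Pi.single j (1:ℝ) : Fin N → ℝ) k))
      = A i k * (u k - v k) - t * (A i k * (Pi.single j (1:ℝ) : Fin N → ℝ) k) :=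
    fun k => by ring
  simp_rw [h, Finset.sum_sub_distrib, ← Finset.mul_sum]
  congr 1
  simp [Pi.single_apply, mul_ite]
  
/-- If `v` solves `min ‖A(u−w)‖₂²` over `w ∈ P` with `supp(w) ⊆ J ⊆ supp(u)`, then
`f*_j(u,v) = ‖A(u−v)‖₂²` for `j ∈ J` and `f*_j(u,v) ≤ ‖A(u−v)‖₂²` for `j ∉ J`. -/
theorem stmt_2 {N m K : ℕ} (P : Set (Fin N → ℝ)) (hcl : IsClosed P)
    (h0 : (0 : Fin N → ℝ) ∈ P)
    (A : Matrix (Fin m) (Fin N) ℝ) (hA : ∀ j : Fin N, (fun k => A k j) ≠ 0)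
    (u : Fin N → ℝ) (hu0 : u ≠ 0) (huP : u ∈ P) (huK : {i | u i ≠ 0}.ncard ≤ K)
    (J : Set (Fin N)) (hJ : J ⊆ {i | u i ≠ 0})
    (v : Fin N → ℝ) (hvP : v ∈ P) (hvs : {i | v i ≠ 0} ⊆ J)
    (hopt : ∀ w : Fin N → ℝ, w ∈ P → {i | w i ≠ 0} ⊆ J →
      ∑ i, (A.mulVec (u - v)) i ^ 2 ≤ ∑ i, (A.mulVec (u - w)) i ^ 2) :
    (∀ j ∈ J, fstar A P u v j = ∑ i, (A.mulVec (u - v)) i ^ 2) ∧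
    (∀ j ∉ J, fstar A P u v j ≤ ∑ i, (A.mulVec (u - v)) i ^ 2) := by
  have hmem : ∀ j : Fin N, (0 : ℝ) ∈
      {t : ℝ | v + t • (Pi.single j (1 : ℝ) : Fin N → ℝ) ∈ P} := by
    intro j; simp [hvP]
  have hle : ∀ j : Fin N, fstar A P u v j ≤ ∑ i, (A.mulVec (u - v)) i ^ 2 := by
    intro j
    have hbdd : BddBelow ((fun t : ℝ => ∑ i, (A.mulVec (u - v) i - t * A i j) ^ 2) ''
        {t : ℝ | v + t • (Pi.single j (1 : ℝ) : Fin N → ℝ) ∈ P}) := by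
      refine ⟨0, fun b hb => ?_⟩
      obtain ⟨t, _, rfl⟩ := hb
      positivity
    have h0m : (∑ i, (A.mulVec (u - v) i - 0 * A i j) ^ 2)
        ∈ (fun t : ℝ => ∑ i, (A.mulVec (u - v) i - t * A i j) ^ 2) ''
        {t : ℝ | v + t • (Pi.single j (1 : ℝ) : Fin N → ℝ) ∈ P} := ⟨0, hmem j, rfl⟩
    have h := csInf_le hbdd h0m
    simpa [fstar] using h
  refine ⟨fun j hj => le_antisymm (hle j) ?_, fun j _ => hle j⟩
  simp only [fstar]
  apply le_csInf ((Set.nonempty_of_mem (hmem j)).image _)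
  rintro b ⟨t, ht, rfl⟩
  have hw := hopt (v + t • (Pi.single j (1 : ℝ) : Fin N → ℝ)) ht ?_
  · calc ∑ i, (A.mulVec (u - v)) i ^ 2 ≤ _ := hw
    _ = ∑ i, (A.mulVec (u - v) i - t * A i j) ^ 2 := by
        simp_rw [mulVec_shift]
  · intro i hi
    rcases eq_or_ne i j with rfl | hij
    · exact hj
    · apply hvs
      simpa [Pi.single_apply, hij] using hi
end

section
/- If P ⊆ ℝ^N is a convex and CP admissible set, then the dimension of P (i.e., the dimension of the affine hull of P) equals max{ |supp(x)| : x ∈ P }. -/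
/-!
Take `x ∈ P` whose support is as large as possible. Every `y ∈ P` is supported inside `supp x`:
otherwise a generic point of the segment `[x, y]` would lie in `P` with support containing
`supp x ∪ supp y`. Conversely, CP admissibility puts each `x i • eᵢ` (`i ∈ supp x`) in `P`. Since
`0 ∈ P`, the direction of the affine span is the linear span of `P`, which is therefore the space
of vectors supported in `supp x`, of dimension `|supp x|`.
-/

open Set

/-- `P` is coordinate projection (CP) admissible: for every `x ∈ P` and every
index set `J ⊆ supp(x)`, the coordinate projection `π_J(x)` belongs to `P`. -/
def CPAdmissible {N : ℕ} (P : Set (Fin N → ℝ)) : Prop :=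
  ∀ x ∈ P, ∀ J : Set (Fin N), J ⊆ {i | x i ≠ 0} → J.indicator x ∈ P

theorem direction_affineSpan_eq_span_of_zero_mem {k V : Type*} [Ring k] [AddCommGroup V]
    [Module k V] {s : Set V} (h0 : (0 : V) ∈ s) :
    (affineSpan k s).direction = Submodule.span k s := by
  simp [direction_affineSpan, vectorSpan_eq_span_vsub_set_right k h0]

theorem Convex.exists_mem_support_union_subset {𝕜 ι : Type*} [Field 𝕜] [LinearOrder 𝕜]
    [IsStrictOrderedRing 𝕜] [Finite ι] {s : Set (ι → 𝕜)} (hs : Convex 𝕜 s) {x y : ι → 𝕜}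
    (hx : x ∈ s) (hy : y ∈ s) :
    ∃ z ∈ s, Function.support x ∪ Function.support y ⊆ Function.support z := by
  -- The `i`-th coordinate of `(1 - t) • x + t • y` is affine in `t`, and vanishes for at most
  -- the one value `x i / (x i - y i)` unless it is constantly `x i = y i`.
  obtain ⟨t, ⟨ht0, ht1⟩, ht⟩ :=
    ((Ioo_infinite (zero_lt_one' 𝕜)).sdiff (finite_range fun i ↦ x i / (x i - y i))).nonempty
  refine ⟨(1 - t) • x + t • y, hs hx hy (by linarith) ht0.le (by ring), fun i hi ↦ ?_⟩
  simp only [Function.mem_support, Pi.add_apply, Pi.smul_apply, smul_eq_mul] at hi ⊢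
  intro hz
  by_cases hxy : x i = y i
  · have hxi : x i = 0 := by linear_combination hz + t * hxy
    simp [hxi, ← hxy] at hi
  · refine ht ⟨i, ?_⟩
    rw [div_eq_iff (sub_ne_zero.mpr hxy)]
    linear_combination hz

theorem Convex.support_subset_of_forall_ncard_support_le {𝕜 ι : Type*} [Field 𝕜] [LinearOrder 𝕜]
    [IsStrictOrderedRing 𝕜] [Finite ι] {s : Set (ι → 𝕜)} (hs : Convex 𝕜 s) {x y : ι → 𝕜}
    (hx : x ∈ s) (hmax : ∀ z ∈ s, (Function.support z).ncard ≤ (Function.support x).ncard)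
    (hy : y ∈ s) : Function.support y ⊆ Function.support x := by
  obtain ⟨z, hz, hxyz⟩ := hs.exists_mem_support_union_subset hx hy
  have hxz : Function.support x = Function.support z :=
    eq_of_subset_of_ncard_le (subset_union_left.trans hxyz) (hmax z hz)
  exact hxz ▸ subset_union_right.trans hxyz

namespace CPAdmissible

variable {N : ℕ} {P : Set (Fin N → ℝ)}

theorem zero_mem (hcp : CPAdmissible P) (hne : P.Nonempty) : (0 : Fin N → ℝ) ∈ P := by
  obtain ⟨x, hx⟩ := hne
  simpa [Pi.zero_def] using hcp x hx ∅ (empty_subset _)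

theorem single_mem (hcp : CPAdmissible P) {x : Fin N → ℝ} (hx : x ∈ P) {i : Fin N}
    (hi : x i ≠ 0) : Pi.single i (x i) ∈ P := by
  convert hcp x hx {i} (singleton_subset_iff.mpr hi) using 1
  ext j
  by_cases hj : j = i <;> simp [hj]

theorem span_eq_spanSubset (hcp : CPAdmissible P) {x : Fin N → ℝ} (hx : x ∈ P)
    (hsupp : ∀ y ∈ P, Function.support y ⊆ Function.support x) :
    Submodule.span ℝ P = Pi.spanSubset ℝ (Function.support x) := by
  refine le_antisymm (Submodule.span_le.mpr fun y hy ↦ ?_) (Submodule.span_le.mpr ?_)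
  · exact Pi.mem_spanSubset_iff.mpr fun i hi ↦ Function.notMem_support.mp
      (fun hyi ↦ hi (hsupp y hy hyi))
  · rintro _ ⟨i, hi, rfl⟩
    have hsingle : Pi.basisFun ℝ (Fin N) i = (x i)⁻¹ • Pi.single i (x i) := by
      rw [Pi.basisFun_apply, ← Pi.single_smul, smul_eq_mul, inv_mul_cancel₀ hi]
    rw [hsingle]
    exact Submodule.smul_mem _ _ (Submodule.subset_span (hcp.single_mem hx hi))

end CPAdmissible

/-- For a convex and CP admissible set `P`, the dimension of `P` (the dimension of
its affine hull) equals `max { |supp(x)| : x ∈ P }`. -/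
theorem stmt_6 {N : ℕ} (P : Set (Fin N → ℝ)) (hne : P.Nonempty)
    (hconv : Convex ℝ P) (hcp : CPAdmissible P) :
    Module.finrank ℝ (affineSpan ℝ P).direction =
      sSup {n : ℕ | ∃ x ∈ P, {i | x i ≠ 0}.ncard = n} := by
  let supportCard (x : Fin N → ℝ) : ℕ := (Function.support x).ncard
  change _ = sSup (supportCard '' P)
  have hbdd : BddAbove (supportCard '' P) :=
    ⟨N, forall_mem_image.mpr fun x _ ↦ (ncard_le_ncard (subset_univ _)).trans_eq (by simp)⟩
  obtain ⟨x, hx, hxmax⟩ := Nat.sSup_mem (hne.image supportCard) hbdd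
  have hmax : ∀ y ∈ P, supportCard y ≤ supportCard x :=
    fun y hy ↦ hxmax ▸ le_csSup hbdd (mem_image_of_mem _ hy)
  rw [direction_affineSpan_eq_span_of_zero_mem (hcp.zero_mem hne),
    hcp.span_eq_spanSubset hx fun y hy ↦ hconv.support_subset_of_forall_ncard_support_le hx hmax hy,
    Pi.dim_spanSubset, ← hxmax]
end

section
/- Let P ⊆ ℝ^N be a closed and CP admissible set. Then for every index set 𝒥 ⊆ {1,…,N}, the coordinate projection image π_𝒥(P) = {π_𝒥(x) : x ∈ P} is a closed subset of ℝ^N. -/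
open Set

/-- For a closed CP admissible set `P`, every coordinate projection image
`π_J(P)` is closed. -/
theorem stmt_7 {N : ℕ} (P : Set (Fin N → ℝ)) (hne : P.Nonempty)
    (hcl : IsClosed P) (hcp : CPAdmissible P) (J : Set (Fin N)) :
    IsClosed ((fun x => J.indicator x) '' P) := by
  have himg : (fun x => J.indicator x) '' P = P ∩ {x | ∀ i ∉ J, x i = 0} := by
    ext y
    constructor
    · rintro ⟨x, hx, rfl⟩
      refine ⟨?_, ?_⟩
      · have h := hcp x hx (J ∩ {i | x i ≠ 0}) inter_subset_right
        have heq : J.indicator x = (J ∩ {i | x i ≠ 0}).indicator x := by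
          funext i
          by_cases hi : i ∈ J
          · by_cases hz : x i = 0 <;> simp [indicator, hi, hz]
          · simp [indicator, hi]
        show J.indicator x ∈ P; rw [heq]; exact h
      · intro i hi; simp [indicator, hi]
    · rintro ⟨hy, hv⟩
      exact ⟨y, hy, by funext i; by_cases hi : i ∈ J <;> simp [indicator, hi, hv i]⟩
  rw [himg]
  have hV : IsClosed {x : Fin N → ℝ | ∀ i ∉ J, x i = 0} := by
    have : {x : Fin N → ℝ | ∀ i ∉ J, x i = 0} = ⋂ i ∈ Jᶜ, {x | x i = 0} := by
      ext x; simp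
    rw [this]
    exact isClosed_biInter fun i _ => isClosed_eq (continuous_apply i) continuous_const
  exact hcl.inter hV
end

section
/- Let C be a closed convex cone in ℝ^N (a closed convex set containing 0 that is closed under multiplication by nonnegative scalars). Then C is CP admissible if and only if there exist four pairwise disjoint index sets ℐ₁, ℐ₊, ℐ₋, ℐ₀ (some possibly empty) whose union is {1,…,N} such that C = { x ∈ ℝ^N : x_i ∈ ℝ for i ∈ ℐ₁, x_i ≥ 0 for i ∈ ℐ₊, x_i ≤ 0 for i ∈ ℐ₋, x_i = 0 for i ∈ ℐ₀ }. -/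
open Set

/-- A closed convex cone `C ⊆ ℝ^N` is CP admissible iff it is a product of copies
of `ℝ`, `ℝ₊`, `ℝ₋` and `{0}` over a partition `ℐ₁, ℐ₊, ℐ₋, ℐ₀` of the coordinates. -/
theorem stmt_8 {N : ℕ} (C : Set (Fin N → ℝ)) (hcl : IsClosed C) (hconv : Convex ℝ C)
    (h0 : (0 : Fin N → ℝ) ∈ C) (hcone : ∀ x ∈ C, ∀ t : ℝ, 0 ≤ t → t • x ∈ C) :
    CPAdmissible C ↔
      ∃ I₁ Ip Im I₀ : Set (Fin N),
        Disjoint I₁ Ip ∧ Disjoint I₁ Im ∧ Disjoint I₁ I₀ ∧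
        Disjoint Ip Im ∧ Disjoint Ip I₀ ∧ Disjoint Im I₀ ∧
        I₁ ∪ Ip ∪ Im ∪ I₀ = Set.univ ∧
        C = {x : Fin N → ℝ | (∀ i ∈ Ip, 0 ≤ x i) ∧ (∀ i ∈ Im, x i ≤ 0) ∧
              (∀ i ∈ I₀, x i = 0)} := by
  classical
  constructor
  · intro hCP
    set e : Fin N → (Fin N → ℝ) := fun i => Pi.single i 1 with he
    have key : ∀ x ∈ C, ∀ i : Fin N, x i ≠ 0 → Pi.single i (x i) ∈ C := by
      intro x hx i hxi
      have h := hCP x hx {i} (by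
        intro j hj
        simp only [Set.mem_singleton_iff] at hj
        subst hj
        exact hxi)
      have heq : ({i} : Set (Fin N)).indicator x = Pi.single i (x i) := by
        funext j
        by_cases hji : j = i
        · subst hji; simp [Set.indicator_apply]
        · simp [Set.indicator_apply, hji, Pi.single_apply]
      rwa [heq] at h
    have hpos : ∀ x ∈ C, ∀ i, 0 < x i → e i ∈ C := by
      intro x hx i hxi
      have h := hcone _ (key x hx i hxi.ne') (x i)⁻¹ (by positivity)
      have heq : (x i)⁻¹ • (Pi.single i (x i) : Fin N → ℝ) = e i := by
        funext j
        by_cases hji : j = i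
        · subst hji; simp [he, Pi.single_apply, inv_mul_cancel₀ hxi.ne']
        · simp [he, Pi.single_apply, hji]
      rwa [heq] at h
    have hneg : ∀ x ∈ C, ∀ i, x i < 0 → -e i ∈ C := by
      intro x hx i hxi
      have h := hcone _ (key x hx i hxi.ne) (-(x i)⁻¹)
        (by rw [neg_nonneg]; exact inv_nonpos.mpr hxi.le)
      have heq : (-(x i)⁻¹) • (Pi.single i (x i) : Fin N → ℝ) = -e i := by
        funext j
        by_cases hji : j = i
        · subst hji; simp [he, Pi.single_apply, inv_mul_cancel₀ hxi.ne]
        · simp [he, Pi.single_apply, hji]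
      rwa [heq] at h
    have hadd : ∀ a ∈ C, ∀ b ∈ C, a + b ∈ C := by
      intro a ha b hb
      have h2 := hconv ha hb (by norm_num : (0:ℝ) ≤ 1/2) (by norm_num : (0:ℝ) ≤ 1/2)
        (by norm_num)
      have h3 := hcone _ h2 2 (by norm_num)
      have heq : (2:ℝ) • ((1/2 : ℝ) • a + (1/2 : ℝ) • b) = a + b := by
        funext j; simp; ring
      rwa [heq] at h3
    refine ⟨{i | e i ∈ C ∧ -e i ∈ C}, {i | e i ∈ C ∧ -e i ∉ C},
      {i | e i ∉ C ∧ -e i ∈ C}, {i | e i ∉ C ∧ -e i ∉ C}, ?_, ?_, ?_, ?_, ?_, ?_, ?_, ?_⟩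
    · rw [Set.disjoint_left]; intro i h1 h2; exact h2.2 h1.2
    · rw [Set.disjoint_left]; intro i h1 h2; exact h2.1 h1.1
    · rw [Set.disjoint_left]; intro i h1 h2; exact h2.1 h1.1
    · rw [Set.disjoint_left]; intro i h1 h2; exact h2.1 h1.1
    · rw [Set.disjoint_left]; intro i h1 h2; exact h2.1 h1.1
    · rw [Set.disjoint_left]; intro i h1 h2; exact h2.2 h1.2
    · ext i; simp only [Set.mem_union, Set.mem_setOf_eq, Set.mem_univ, iff_true]; tauto
    · ext x
      simp only [Set.mem_setOf_eq]
      constructor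
      · intro hx
        refine ⟨?_, ?_, ?_⟩
        · intro i hi
          by_contra h
          push_neg at h
          exact hi.2 (hneg x hx i h)
        · intro i hi
          by_contra h
          push_neg at h
          exact hi.1 (hpos x hx i h)
        · intro i hi
          by_contra h
          rcases lt_or_gt_of_ne h with hl | hg
          · exact hi.2 (hneg x hx i hl)
          · exact hi.1 (hpos x hx i hg)
      · rintro ⟨h1, h2, h3⟩
        have hx' : x = ∑ i, Pi.single i (x i) := (Finset.univ_sum_single x).symm
        rw [hx']
        refine Finset.sum_induction _ (· ∈ C) (fun a b ha hb => hadd a ha b hb) h0 ?_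
        intro i _
        rcases lt_trichotomy (x i) 0 with hl | hz | hg
        · have hne : -e i ∈ C := by
            by_contra hne
            by_cases hpe : e i ∈ C
            · exact absurd (h1 i ⟨hpe, hne⟩) (by linarith)
            · exact hl.ne (h3 i ⟨hpe, hne⟩)
          have h := hcone _ hne (-(x i)) (by linarith)
          have heq : (-(x i)) • (-e i) = Pi.single i (x i) := by
            funext j
            by_cases hji : j = i
            · subst hji; simp [he, Pi.single_apply]
            · simp [he, Pi.single_apply, hji]
          rwa [heq] at h
        · rw [hz, Pi.single_zero]; exact h0
        · have hpe : e i ∈ C := by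
            by_contra hpe
            by_cases hne : -e i ∈ C
            · exact absurd (h2 i ⟨hpe, hne⟩) (by linarith)
            · exact hg.ne' (h3 i ⟨hpe, hne⟩)
          have h := hcone _ hpe (x i) (by linarith)
          have heq : (x i) • e i = Pi.single i (x i) := by
            funext j
            by_cases hji : j = i
            · subst hji; simp [he, Pi.single_apply]
            · simp [he, Pi.single_apply, hji]
          rwa [heq] at h
  · rintro ⟨I₁, Ip, Im, I₀, -, -, -, -, -, -, -, rfl⟩
    intro x hx J hJ
    obtain ⟨h1, h2, h3⟩ := hx
    refine ⟨?_, ?_, ?_⟩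
    · intro i hi
      by_cases hiJ : i ∈ J
      · simpa [Set.indicator_apply, hiJ] using h1 i hi
      · simp [Set.indicator_apply, hiJ]
    · intro i hi
      by_cases hiJ : i ∈ J
      · simpa [Set.indicator_apply, hiJ] using h2 i hi
      · simp [Set.indicator_apply, hiJ]
    · intro i hi
      by_cases hiJ : i ∈ J
      · simpa [Set.indicator_apply, hiJ] using h3 i hi
      · simp [Set.indicator_apply, hiJ]
end

section
/- Let P ⊆ ℝ^N be a closed, convex and CP admissible set. Then P = W + K (Minkowski sum), where W ⊆ P is a compact, convex and CP admissible set, and K ⊆ P is a closed, convex and CP admissible cone. -/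
open Set
open scoped Pointwise

/-!
Take `K = {v | ℝ≥0 • v ⊆ P}` and `W = P ∩ [-c, c]^N`. Convexity and CP admissibility make `P`
solid: with `x` it contains every `y` whose coordinates satisfy `y i ∈ [0, x i]` (or `[x i, 0]`).
Hence along each signed coordinate half-axis `P` is either bounded or contains the whole
half-axis. Choosing `c` beyond all the finite bounds, clamping `x ∈ P` to the box gives `w ∈ W`,
and `x - w` is a sum of vectors on unbounded half-axes, hence lies in `K`. Conversely
`P + K ⊆ P` because `P` is closed.
-/

open Metric Filter Topology

/-- For a closed convex `P ∋ 0` this is the usual recession cone `{v | P + ℝ≥0 • v ⊆ P}`, see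
`Convex.add_mem_of_mem_recessionCone`. -/
def recessionCone {E : Type*} [AddCommGroup E] [Module ℝ E] (P : Set E) : Set E :=
  {v | ∀ t : ℝ, 0 ≤ t → t • v ∈ P}

section RecessionCone

variable {E : Type*} [AddCommGroup E] [Module ℝ E] {P : Set E} {u v : E}

lemma recessionCone_subset : recessionCone P ⊆ P := fun v hv => by
  simpa using hv 1 zero_le_one

lemma zero_mem_recessionCone (h0 : (0 : E) ∈ P) : (0 : E) ∈ recessionCone P := fun t _ => by
  rwa [smul_zero]

lemma smul_mem_recessionCone (hv : v ∈ recessionCone P) {t : ℝ} (ht : 0 ≤ t) :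
    t • v ∈ recessionCone P := fun s hs => by
  rw [smul_smul]
  exact hv _ (mul_nonneg hs ht)

protected lemma Convex.recessionCone (hP : Convex ℝ P) : Convex ℝ (recessionCone P) := by
  intro u hu v hv a b ha hb hab t ht
  rw [smul_add, smul_comm t a, smul_comm t b]
  exact hP (hu t ht) (hv t ht) ha hb hab

lemma Convex.add_mem_recessionCone (hP : Convex ℝ P) (hu : u ∈ recessionCone P)
    (hv : v ∈ recessionCone P) : u + v ∈ recessionCone P := fun t ht => by
  have := hP (hu (2 * t) (by positivity)) (hv (2 * t) (by positivity))
    (by norm_num : (0 : ℝ) ≤ 1 / 2) (by norm_num : (0 : ℝ) ≤ 1 / 2) (by norm_num)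
  rwa [smul_smul, smul_smul, show (1 / 2 : ℝ) * (2 * t) = t by ring, ← smul_add] at this

lemma StarConvex.exists_mem_recessionCone_of_lt_of_smul_mem (hP : StarConvex ℝ 0 P) (v : E) :
    ∃ b : ℝ, ∀ t, b < t → t • v ∈ P → v ∈ recessionCone P := by
  by_cases hv : v ∈ recessionCone P
  · exact ⟨0, fun _ _ _ => hv⟩
  obtain ⟨s, hs, hsv⟩ : ∃ s : ℝ, 0 ≤ s ∧ s • v ∉ P := by simpa [recessionCone] using hv
  refine ⟨s, fun t hst htv => absurd ?_ hsv⟩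
  have ht : 0 < t := hs.trans_lt hst
  have := hP.smul_mem htv (div_nonneg hs ht.le) ((div_le_one ht).2 hst.le)
  rwa [smul_smul, div_mul_cancel₀ s ht.ne'] at this

variable [TopologicalSpace E]

protected lemma IsClosed.recessionCone [ContinuousConstSMul ℝ E] (hP : IsClosed P) :
    IsClosed (recessionCone P) := by
  simp only [recessionCone, ofPred_forall]
  exact isClosed_biInter fun t _ => hP.preimage (continuous_const_smul t)

/-- `u + v` is the limit of the points `(1 - t) • u + t • (t⁻¹ • v)` of `P` as `t → 0⁺`. -/
lemma Convex.add_mem_of_mem_recessionCone [IsTopologicalAddGroup E] [ContinuousSMul ℝ E]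
    (hP : Convex ℝ P) (hcl : IsClosed P) (hu : u ∈ P) (hv : v ∈ recessionCone P) :
    u + v ∈ P := by
  have hlim : Tendsto (fun t : ℝ => (1 - t) • u + v) (𝓝[>] (0 : ℝ)) (𝓝 (u + v)) := by
    have : Continuous fun t : ℝ => (1 - t) • u + v := by fun_prop
    simpa using (this.tendsto 0).mono_left nhdsWithin_le_nhds
  refine hcl.mem_of_tendsto hlim ?_
  filter_upwards [Ioc_mem_nhdsGT zero_lt_one] with t ⟨ht0, ht1⟩
  have := hP hu (hv t⁻¹ (inv_nonneg.2 ht0.le)) (sub_nonneg.2 ht1) ht0.le (sub_add_cancel 1 t)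
  rwa [smul_smul, mul_inv_cancel₀ ht0.ne', one_smul] at this

end RecessionCone

section Coordinates

variable {ι : Type*} [DecidableEq ι] {P : Set (ι → ℝ)}

lemma StarConvex.exists_single_mem_recessionCone (hP : StarConvex ℝ 0 P) (i : ι) :
    ∃ b : ℝ, ∀ a : ℝ, b < |a| → Pi.single i a ∈ P → Pi.single i a ∈ recessionCone P := by
  obtain ⟨b₁, hb₁⟩ := hP.exists_mem_recessionCone_of_lt_of_smul_mem (Pi.single i 1)
  obtain ⟨b₂, hb₂⟩ := hP.exists_mem_recessionCone_of_lt_of_smul_mem (Pi.single i (-1))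
  refine ⟨max b₁ b₂, fun a hab ha => ?_⟩
  rcases lt_trichotomy a 0 with hneg | rfl | hpos
  · have hsingle : Pi.single i a = (-a) • Pi.single i (-1 : ℝ) := by
      rw [← Pi.single_smul', smul_eq_mul, neg_mul_neg, mul_one]
    rw [abs_of_neg hneg] at hab
    rw [hsingle] at ha ⊢
    exact smul_mem_recessionCone (hb₂ (-a) (max_lt_iff.1 hab).2 ha) (neg_nonneg.2 hneg.le)
  · rw [Pi.single_zero] at ha ⊢
    exact zero_mem_recessionCone ha
  · have hsingle : Pi.single i a = a • Pi.single i (1 : ℝ) := by simp [← Pi.single_smul']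
    rw [abs_of_pos hpos] at hab
    rw [hsingle] at ha ⊢
    exact smul_mem_recessionCone (hb₁ a (max_lt_iff.1 hab).1 ha) hpos.le

end Coordinates

section CPAdmissible

variable {N : ℕ} {P Q : Set (Fin N → ℝ)} {x y : Fin N → ℝ}

lemma CPAdmissible.indicator_mem (hP : CPAdmissible P) (hx : x ∈ P) (J : Set (Fin N)) :
    J.indicator x ∈ P := by
  rw [← indicator_inter_support]
  exact hP x hx _ inter_subset_right

lemma CPAdmissible.inter (hP : CPAdmissible P) (hQ : CPAdmissible Q) : CPAdmissible (P ∩ Q) :=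
  fun x hx J hJ => ⟨hP x hx.1 J hJ, hQ x hx.2 J hJ⟩

lemma cpAdmissible_closedBall (c : ℝ) : CPAdmissible (closedBall (0 : Fin N → ℝ) c) := by
  intro x hx J _
  rw [mem_closedBall_zero_iff] at hx ⊢
  exact (pi_norm_le_iff_of_nonneg ((norm_nonneg x).trans hx)).2 fun i =>
    (norm_indicator_le_norm_self x i).trans ((norm_le_pi_norm x i).trans hx)

protected lemma CPAdmissible.recessionCone (hP : CPAdmissible P) :
    CPAdmissible (recessionCone P) := by
  intro v hv J _ t ht
  convert hP.indicator_mem (hv t ht) J using 1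
  exact (indicator_const_smul J t v).symm

lemma CPAdmissible.update_mem (hP : CPAdmissible P) (hconv : Convex ℝ P) (hx : x ∈ P)
    {a : Fin N} {r : ℝ} (hr : r ∈ uIcc 0 (x a)) : Function.update x a r ∈ P := by
  rw [← segment_eq_uIcc] at hr
  obtain ⟨s, t, hs, ht, hst, rfl⟩ := hr
  have hx₀ : Function.update x a 0 ∈ P := by
    convert hP.indicator_mem hx {a}ᶜ using 1
    ext j
    by_cases hj : j = a <;> simp [hj]
  convert hconv hx₀ hx hs ht hst using 1
  ext j
  by_cases hj : j = a
  · simp [hj]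
  · simp [hj, ← add_mul, hst]

lemma CPAdmissible.mem_of_forall_mem_uIcc (hP : CPAdmissible P) (hconv : Convex ℝ P)
    (hx : x ∈ P) (hy : ∀ i, y i ∈ uIcc 0 (x i)) : y ∈ P := by
  suffices ∀ S : Finset (Fin N), S.piecewise y x ∈ P by simpa using this Finset.univ
  intro S
  induction S using Finset.induction_on with
  | empty => simpa using hx
  | insert a S ha ih =>
    rw [Finset.piecewise_insert]
    exact hP.update_mem hconv ih (by rw [Finset.piecewise_eq_of_notMem _ _ _ ha]; exact hy a)

lemma CPAdmissible.zero_mem_s9 (hP : CPAdmissible P) (hne : P.Nonempty) : (0 : Fin N → ℝ) ∈ P := by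
  obtain ⟨x, hx⟩ := hne
  simpa only [indicator_empty'] using hP.indicator_mem hx ∅

lemma CPAdmissible.single_mem_s9 (hP : CPAdmissible P) (hconv : Convex ℝ P) (hx : x ∈ P)
    (i : Fin N) : Pi.single i (x i) ∈ P :=
  hP.mem_of_forall_mem_uIcc hconv hx fun j => by
    rcases eq_or_ne j i with rfl | hj
    · simp
    · simp [hj]

lemma CPAdmissible.exists_forall_single_mem_recessionCone (hP : CPAdmissible P)
    (hconv : Convex ℝ P) (h0 : (0 : Fin N → ℝ) ∈ P) :
    ∃ c : ℝ, 0 ≤ c ∧ ∀ x ∈ P, ∀ i, c < |x i| → Pi.single i (x i) ∈ recessionCone P := by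
  choose b hb using (hconv.starConvex h0).exists_single_mem_recessionCone
  obtain ⟨M, hM⟩ := Finite.exists_le b
  exact ⟨max M 0, le_max_right _ _, fun x hx i hxi =>
    hb i (x i) ((hM i).trans_lt ((le_max_left _ _).trans_lt hxi)) (hP.single_mem_s9 hconv hx i)⟩

/-- Clamping the coordinates of `x` to `[-c, c]` gives the part in the box; what is left is
supported on the coordinates with `|x i| > c`, each of which points along a ray of `P`. -/
lemma CPAdmissible.mem_inter_closedBall_add_recessionCone (hP : CPAdmissible P)
    (hconv : Convex ℝ P) {c : ℝ} (hc : 0 ≤ c)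
    (hcK : ∀ x ∈ P, ∀ i, c < |x i| → Pi.single i (x i) ∈ recessionCone P) (hx : x ∈ P) :
    x ∈ (P ∩ closedBall 0 c) + recessionCone P := by
  set w : Fin N → ℝ := fun i => max (-c) (min c (x i))
  have hwP : w ∈ P := hP.mem_of_forall_mem_uIcc hconv hx fun i => by
    rw [mem_uIcc]
    grind
  have hwc : w ∈ closedBall 0 c := by
    rw [mem_closedBall_zero_iff, pi_norm_le_iff_of_nonneg hc]
    intro i
    rw [Real.norm_eq_abs]
    grind [abs_le]
  have hK0 : (0 : Fin N → ℝ) ∈ recessionCone P := zero_mem_recessionCone (hP.zero_mem_s9 ⟨x, hx⟩)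
  have hsingle : ∀ i, Pi.single i ((x - w) i) ∈ recessionCone P := by
    intro i
    by_cases hxi : c < |x i|
    · refine hP.recessionCone.mem_of_forall_mem_uIcc hconv.recessionCone (hcK x hx i hxi)
        fun j => ?_
      rcases eq_or_ne j i with rfl | hj
      · simp only [Pi.single_eq_same, Pi.sub_apply, mem_uIcc]
        grind
      · simp [hj]
    · obtain ⟨hlo, hhi⟩ := abs_le.1 (not_lt.1 hxi)
      have hwi : w i = x i := by simp only [w, min_eq_right hhi, max_eq_right hlo]
      rwa [Pi.sub_apply, hwi, sub_self, Pi.single_zero]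
  have hxw : x - w ∈ recessionCone P := by
    rw [← Finset.univ_sum_single (x - w)]
    exact Finset.sum_induction _ (· ∈ recessionCone P)
      (fun _ _ => hconv.add_mem_recessionCone) hK0 fun i _ => hsingle i
  exact ⟨w, ⟨hwP, hwc⟩, x - w, hxw, add_sub_cancel w x⟩

end CPAdmissible

/-- A closed, convex, CP admissible set decomposes as `P = W + K` with `W ⊆ P`
compact, convex, CP admissible and `K ⊆ P` a closed, convex, CP admissible cone. -/
theorem stmt_9 {N : ℕ} (P : Set (Fin N → ℝ)) (hne : P.Nonempty)
    (hcl : IsClosed P) (hconv : Convex ℝ P) (hcp : CPAdmissible P) :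
    ∃ W K : Set (Fin N → ℝ),
      W ⊆ P ∧ IsCompact W ∧ Convex ℝ W ∧ CPAdmissible W ∧
      K ⊆ P ∧ IsClosed K ∧ Convex ℝ K ∧ CPAdmissible K ∧
      (0 : Fin N → ℝ) ∈ K ∧ (∀ x ∈ K, ∀ t : ℝ, 0 ≤ t → t • x ∈ K) ∧
      P = W + K := by
  have h0 := hcp.zero_mem_s9 hne
  obtain ⟨c, hc, hcK⟩ := hcp.exists_forall_single_mem_recessionCone hconv h0
  refine ⟨P ∩ closedBall 0 c, recessionCone P, inter_subset_left,
    (isCompact_closedBall 0 c).inter_left hcl, hconv.inter (convex_closedBall 0 c),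
    hcp.inter (cpAdmissible_closedBall c), recessionCone_subset, hcl.recessionCone,
    hconv.recessionCone, hcp.recessionCone, zero_mem_recessionCone h0,
    fun _ hv _ ht => smul_mem_recessionCone hv ht, ?_⟩
  refine Subset.antisymm (fun x hx => hcp.mem_inter_closedBall_add_recessionCone hconv hc hcK hx) ?_
  rintro _ ⟨w, hw, v, hv, rfl⟩
  exact hconv.add_mem_of_mem_recessionCone hcl hw.1 hv
end

section
/- Let P ⊆ ℝ^N be a closed, convex and CP admissible set. Then the conic hull of P satisfies cone(P) = { λ x : λ ≥ 0, x ∈ P }, and cone(P) is a closed, convex and CP admissible cone. -/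
/-! Convexity of `P` makes `t • x + s • z` a ray through a point of `P`, so the rays through `P`
already form a convex cone, which is then `cone(P)`. This cone inherits CP admissibility from `P`,
and a CP admissible cone is closed: if `y` lies in its closure, then for each `i` with `y i ≠ 0`
the cone contains a point whose `i`-th coordinate has the sign of `y i`; projecting that point to
coordinate `i` and rescaling gives `Pi.single i (y i)`, and `y` is the sum of these. -/

open Set

/-- The conic hull of `P`: all nonnegative combinations of finitely many vectors of `P`. -/
def coneHull {N : ℕ} (P : Set (Fin N → ℝ)) : Set (Fin N → ℝ) :=
  {y | ∃ (n : ℕ) (c : Fin n → ℝ) (x : Fin n → (Fin N → ℝ)),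
    (∀ i, 0 ≤ c i) ∧ (∀ i, x i ∈ P) ∧ y = ∑ i, c i • x i}

open Pointwise

section Rays

variable {E : Type*} [AddCommGroup E] [Module ℝ E] {P : Set E}

def rayHull (P : Set E) : Set E :=
  {y | ∃ (t : ℝ) (x : E), 0 ≤ t ∧ x ∈ P ∧ y = t • x}

lemma subset_rayHull : P ⊆ rayHull P :=
  fun x hx => ⟨1, x, zero_le_one, hx, (one_smul ℝ x).symm⟩

lemma smul_mem_rayHull {y : E} (hy : y ∈ rayHull P) {a : ℝ} (ha : 0 ≤ a) :
    a • y ∈ rayHull P := by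
  obtain ⟨t, x, ht, hx, rfl⟩ := hy
  exact ⟨a * t, x, mul_nonneg ha ht, hx, smul_smul a t x⟩

lemma Convex.add_mem_rayHull (hP : Convex ℝ P) {y z : E} (hy : y ∈ rayHull P)
    (hz : z ∈ rayHull P) : y + z ∈ rayHull P := by
  obtain ⟨t, x, ht, hx, rfl⟩ := hy
  obtain ⟨s, w, hs, hw, rfl⟩ := hz
  have hmem : t • x + s • w ∈ (t + s) • P := by
    rw [hP.add_smul ht hs]
    exact add_mem_add (smul_mem_smul_set hx) (smul_mem_smul_set hw)
  obtain ⟨v, hv, hv_eq⟩ := hmem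
  exact ⟨t + s, v, add_nonneg ht hs, hv, hv_eq.symm⟩

def Convex.rayCone (hP : Convex ℝ P) (hne : P.Nonempty) : PointedCone ℝ E :=
  PointedCone.ofConeComb (rayHull P) (hne.mono subset_rayHull) fun _ hy _ hz _ ha _ hb =>
    hP.add_mem_rayHull (smul_mem_rayHull hy ha) (smul_mem_rayHull hz hb)

lemma Convex.coe_rayCone (hP : Convex ℝ P) (hne : P.Nonempty) :
    (hP.rayCone hne : Set E) = rayHull P :=
  rfl

end Rays

section CoordinateProjections

variable {N : ℕ}

lemma coneHull_subset {P : Set (Fin N → ℝ)} {C : PointedCone ℝ (Fin N → ℝ)}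
    (hPC : P ⊆ C) : coneHull P ⊆ C := by
  rintro _ ⟨n, c, x, hc, hx, rfl⟩
  exact C.sum_mem fun i _ => C.smul_mem (hc i) (hPC (hx i))

lemma rayHull_subset_coneHull (P : Set (Fin N → ℝ)) : rayHull P ⊆ coneHull P := by
  rintro _ ⟨t, x, ht, hx, rfl⟩
  exact ⟨1, fun _ => t, fun _ => x, fun _ => ht, fun _ => hx, by simp⟩

lemma coneHull_eq_rayHull {P : Set (Fin N → ℝ)} (hP : Convex ℝ P) (hne : P.Nonempty) :
    coneHull P = rayHull P :=
  (coneHull_subset (C := hP.rayCone hne) subset_rayHull).antisymm (rayHull_subset_coneHull P)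

lemma CPAdmissible.rayHull {P : Set (Fin N → ℝ)} (hP : CPAdmissible P) :
    CPAdmissible (rayHull P) := by
  rintro _ ⟨t, x, ht, hx, rfl⟩ J hJ
  have hJx : J ⊆ {i | x i ≠ 0} := fun i hi hxi => hJ hi (by simp [hxi])
  exact ⟨t, J.indicator x, ht, hP x hx J hJx, indicator_const_smul J t x⟩

lemma PointedCone.pi_single_mem_of_cpAdmissible {C : PointedCone ℝ (Fin N → ℝ)}
    (hC : CPAdmissible (C : Set (Fin N → ℝ))) {y : Fin N → ℝ} (hy : y ∈ C) {i : Fin N} {c : ℝ}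
    (hc : 0 < c * y i) : Pi.single i c ∈ C := by
  have hyi : y i ≠ 0 := fun h => by simp [h] at hc
  have hsingle : Pi.single i c = (c / y i) • ({i} : Set (Fin N)).indicator y := by
    ext j
    rcases eq_or_ne j i with rfl | hj
    · simp [hyi]
    · simp [hj]
  rw [hsingle]
  exact C.smul_mem (div_pos_iff.2 (mul_pos_iff.1 hc)).le (hC y hy {i} (by simpa using hyi))

theorem PointedCone.isClosed_of_cpAdmissible (C : PointedCone ℝ (Fin N → ℝ))
    (hC : CPAdmissible (C : Set (Fin N → ℝ))) : IsClosed (C : Set (Fin N → ℝ)) := by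
  refine isClosed_of_closure_subset fun y hy => ?_
  rw [← Finset.univ_sum_single y]
  refine C.sum_mem fun i _ => ?_
  rcases eq_or_ne (y i) 0 with hyi | hyi
  · simp [hyi]
  · have hopen : IsOpen {z : Fin N → ℝ | 0 < y i * z i} :=
      isOpen_lt continuous_const (by fun_prop)
    obtain ⟨z, hz, hzC⟩ := mem_closure_iff.1 hy _ hopen (mul_self_pos.2 hyi)
    exact C.pi_single_mem_of_cpAdmissible hC hzC hz

end CoordinateProjections

theorem stmt_11_general {N : ℕ} (P : Set (Fin N → ℝ)) (hne : P.Nonempty)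
    (hconv : Convex ℝ P) (hcp : CPAdmissible P) :
    coneHull P = {y : Fin N → ℝ | ∃ (t : ℝ) (x : Fin N → ℝ), 0 ≤ t ∧ x ∈ P ∧ y = t • x} ∧
    IsClosed (coneHull P) ∧ Convex ℝ (coneHull P) ∧ CPAdmissible (coneHull P) ∧
    (0 : Fin N → ℝ) ∈ coneHull P ∧
    (∀ x ∈ coneHull P, ∀ t : ℝ, 0 ≤ t → t • x ∈ coneHull P) := by
  set C := hconv.rayCone hne
  have hC : coneHull P = C := (coneHull_eq_rayHull hconv hne).trans (hconv.coe_rayCone hne).symm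
  have hcpC : CPAdmissible (C : Set (Fin N → ℝ)) := hcp.rayHull
  rw [hC]
  exact ⟨hconv.coe_rayCone hne, C.isClosed_of_cpAdmissible hcpC, C.convex, hcpC, C.zero_mem,
    fun x hx t ht => C.smul_mem ht hx⟩

/-- For a closed, convex, CP admissible set `P`, `cone(P) = {λ x : λ ≥ 0, x ∈ P}`,
and `cone(P)` is a closed, convex, CP admissible cone. -/
theorem stmt_11 {N : ℕ} (P : Set (Fin N → ℝ)) (hne : P.Nonempty)
    (hcl : IsClosed P) (hconv : Convex ℝ P) (hcp : CPAdmissible P) :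
    coneHull P = {y : Fin N → ℝ | ∃ (t : ℝ) (x : Fin N → ℝ), 0 ≤ t ∧ x ∈ P ∧ y = t • x} ∧
    IsClosed (coneHull P) ∧ Convex ℝ (coneHull P) ∧ CPAdmissible (coneHull P) ∧
    (0 : Fin N → ℝ) ∈ coneHull P ∧
    (∀ x ∈ coneHull P, ∀ t : ℝ, 0 ≤ t → t • x ∈ coneHull P) :=
  stmt_11_general P hne hconv hcp
end

section
/- Let P ⊆ ℝ^N be a closed, convex and CP admissible set, let A ∈ ℝ^{m×N}, let K ∈ ℕ, let 0 ≠ u ∈ Σ_K ∩ P, and let 𝒥 ⊊ supp(u) be an index set (possibly empty). Let v be any optimal solution of min_w ‖A(w − u)‖₂² subject to w ∈ P and supp(w) ⊆ 𝒥 (such a solution exists). Then (i) Σ_{j ∈ supp(u−v) ∩ 𝒥} ⟨A(u−v), A_{•j}⟩ · (u−v)_j ≤ 0, and (ii) ‖A(u−v)‖₂² ≤ Σ_{j ∈ supp(u) \ 𝒥} ⟨A(u−v), A_{•j}⟩ · (u−v)_j. -/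
open Matrix Set

/-- For `P` closed, convex, CP admissible, `0 ≠ u ∈ Σ_K ∩ P`, `J ⊊ supp(u)`, and `v`
an optimal solution of `min ‖A(w − u)‖₂²` over `w ∈ P` with `supp(w) ⊆ J`:
(i) `∑_{j ∈ supp(u−v) ∩ J} ⟨A(u−v), A_{•j}⟩ (u−v)_j ≤ 0`, and
(ii) `‖A(u−v)‖₂² ≤ ∑_{j ∈ supp(u) \ J} ⟨A(u−v), A_{•j}⟩ (u−v)_j`. -/
theorem stmt_13 {N m K : ℕ} (P : Set (Fin N → ℝ)) (hne : P.Nonempty)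
    (hcl : IsClosed P) (hconv : Convex ℝ P) (hcp : CPAdmissible P)
    (A : Matrix (Fin m) (Fin N) ℝ)
    (u : Fin N → ℝ) (hu0 : u ≠ 0) (huP : u ∈ P) (huK : {i | u i ≠ 0}.ncard ≤ K)
    (J : Set (Fin N)) (hJ : J ⊂ {i | u i ≠ 0})
    (v : Fin N → ℝ) (hvP : v ∈ P) (hvs : {i | v i ≠ 0} ⊆ J)
    (hopt : ∀ w : Fin N → ℝ, w ∈ P → {i | w i ≠ 0} ⊆ J →
      ∑ i, (A.mulVec (v - u)) i ^ 2 ≤ ∑ i, (A.mulVec (w - u)) i ^ 2) :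
    (∑ j, ({i | (u - v) i ≠ 0} ∩ J).indicator
        (fun j => (A.mulVec (u - v) ⬝ᵥ (fun k => A k j)) * (u - v) j) j) ≤ 0 ∧
    ∑ i, (A.mulVec (u - v)) i ^ 2 ≤
      ∑ j, ({i | u i ≠ 0} \ J).indicator
        (fun j => (A.mulVec (u - v) ⬝ᵥ (fun k => A k j)) * (u - v) j) j := by
  classical
  set d : Fin N → ℝ := J.indicator u - v with hd
  set c : Fin m → ℝ := A.mulVec (v - u) with hc
  set e : Fin m → ℝ := A.mulVec d with he
  set r : Fin N → ℝ := u - v with hr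
  have hvz : ∀ i, i ∉ J → v i = 0 := by
    intro i hi
    by_contra h
    exact hi (hvs h)
  have hdz : ∀ i, i ∉ J → d i = 0 := by
    intro i hi
    simp [hd, Set.indicator_of_notMem hi, hvz i hi]
  have hdJ : ∀ i, i ∈ J → d i = u i - v i := by
    intro i hi
    simp [hd, Set.indicator_of_mem hi]
  have hindP : J.indicator u ∈ P := by
    have h1 := hcp u huP (J ∩ {i | u i ≠ 0}) inter_subset_right
    have h2 : (J ∩ {i | u i ≠ 0}).indicator u = J.indicator u := by
      funext i
      by_cases hiJ : i ∈ J
      · by_cases hiu : u i = 0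
        · by_cases hmem : i ∈ J ∩ {i | u i ≠ 0}
          · simp [Set.indicator_of_mem hmem, Set.indicator_of_mem hiJ]
          · simp [Set.indicator_of_notMem hmem, Set.indicator_of_mem hiJ, hiu]
        · have hmem : i ∈ J ∩ {i | u i ≠ 0} := ⟨hiJ, hiu⟩
          simp [Set.indicator_of_mem hmem, Set.indicator_of_mem hiJ]
      · have hmem : i ∉ J ∩ {i | u i ≠ 0} := fun h => hiJ h.1
        simp [Set.indicator_of_notMem hmem, Set.indicator_of_notMem hiJ]
    rwa [h2] at h1
  -- key optimality inequality
  have key : ∀ t : ℝ, 0 ≤ t → t ≤ 1 →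
      ∑ i, c i ^ 2 ≤ ∑ i, (c i + t * e i) ^ 2 := by
    intro t ht0 ht1
    have hwP : v + t • d ∈ P := by
      have hcombo := hconv hvP hindP (by linarith : (0:ℝ) ≤ 1 - t) ht0 (by ring)
      have : (1 - t) • v + t • J.indicator u = v + t • d := by
        funext i
        simp only [Pi.add_apply, Pi.smul_apply, smul_eq_mul, hd, Pi.sub_apply]
        ring
      rwa [this] at hcombo
    have hws : {i | (v + t • d) i ≠ 0} ⊆ J := by
      intro i hi
      by_contra hiJ
      apply hi
      simp [hvz i hiJ, hdz i hiJ]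
    have h := hopt (v + t • d) hwP hws
    have hmv : A.mulVec (v + t • d - u) = fun i => c i + t * e i := by
      have : v + t • d - u = (v - u) + t • d := by abel
      rw [this, Matrix.mulVec_add, Matrix.mulVec_smul]
      funext i
      simp [hc, he]
    rw [hmv] at h
    exact h
  set α := ∑ i, c i * e i with hα
  set β := ∑ i, e i ^ 2 with hβ
  have hβ0 : 0 ≤ β := Finset.sum_nonneg fun i _ => sq_nonneg _
  have hineq : ∀ t : ℝ, 0 ≤ t → t ≤ 1 → 0 ≤ 2 * t * α + t ^ 2 * β := by
    intro t h0 h1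
    have h := key t h0 h1
    have expand : ∑ i, (c i + t * e i) ^ 2
        = (∑ i, c i ^ 2) + (2 * t * α + t ^ 2 * β) := by
      rw [hα, hβ, Finset.mul_sum, Finset.mul_sum, ← Finset.sum_add_distrib,
        ← Finset.sum_add_distrib]
      exact Finset.sum_congr rfl fun i _ => by ring
    rw [expand] at h
    linarith
  have halpha : 0 ≤ α := by
    by_contra hcon
    push_neg at hcon
    have h1 := hineq 1 zero_le_one le_rfl
    have hβpos : 0 < β := by nlinarith
    have ht0 : (0:ℝ) ≤ -α / β := div_nonneg (by linarith) hβpos.le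
    have ht1 : -α / β ≤ 1 := by
      rw [div_le_one hβpos]; linarith
    have h2 := hineq (-α / β) ht0 ht1
    rw [div_pow] at h2
    have : 2 * (-α / β) * α + (-α) ^ 2 / β ^ 2 * β = -(α ^ 2) / β := by
      field_simp
      ring
    rw [this] at h2
    have h3 : 0 ≤ -(α ^ 2) := by
      have h4 := mul_nonneg h2 hβpos.le
      rwa [div_mul_cancel₀ _ hβpos.ne'] at h4
    nlinarith
  -- r = -c pointwise on mulVec
  have hrc : A.mulVec r = fun i => -c i := by
    have : r = -(v - u) := by rw [hr]; abel
    rw [this, Matrix.mulVec_neg]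
    funext i
    simp [hc]
  -- swap lemma
  have swap : ∀ x : Fin N → ℝ,
      ∑ j, (A.mulVec r ⬝ᵥ fun k => A k j) * x j = ∑ k, (A.mulVec r) k * (A.mulVec x) k := by
    intro x
    simp only [dotProduct, Finset.sum_mul]
    rw [Finset.sum_comm]
    refine Finset.sum_congr rfl fun k _ => ?_
    rw [show (A.mulVec x) k = ∑ j, A k j * x j from rfl, Finset.mul_sum]
    exact Finset.sum_congr rfl fun j _ => by ring
  have part1 : (∑ j, ({i | r i ≠ 0} ∩ J).indicator
      (fun j => (A.mulVec r ⬝ᵥ fun k => A k j) * r j) j) = -α := by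
    have term1 : ∀ j, ({i | r i ≠ 0} ∩ J).indicator
        (fun j => (A.mulVec r ⬝ᵥ fun k => A k j) * r j) j
        = (A.mulVec r ⬝ᵥ fun k => A k j) * d j := by
      intro j
      by_cases hjJ : j ∈ J
      · by_cases hjS : r j ≠ 0
        · have hmem : j ∈ ({i | r i ≠ 0} ∩ J) := ⟨hjS, hjJ⟩
          rw [Set.indicator_of_mem hmem, hdJ j hjJ]
          simp [hr]
        · push_neg at hjS
          rw [Set.indicator_of_notMem (fun h => h.1 (by simpa using hjS))]
          have : d j = 0 := by
            rw [hdJ j hjJ]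
            have : u j - v j = r j := by simp [hr]
            rw [this, hjS]
          rw [this, mul_zero]
      · rw [Set.indicator_of_notMem (fun h => hjJ h.2), hdz j hjJ, mul_zero]
    calc (∑ j, ({i | r i ≠ 0} ∩ J).indicator
          (fun j => (A.mulVec r ⬝ᵥ fun k => A k j) * r j) j)
        = ∑ j, (A.mulVec r ⬝ᵥ fun k => A k j) * d j :=
          Finset.sum_congr rfl fun j _ => term1 j
      _ = ∑ k, (A.mulVec r) k * (A.mulVec d) k := swap d
      _ = -α := by
          rw [hα, ← Finset.sum_neg_distrib]
          refine Finset.sum_congr rfl fun k _ => ?_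
          rw [hrc]
          simp only [← he]
          ring
  have part2 : ∑ i, (A.mulVec r) i ^ 2
      = (∑ j, ({i | r i ≠ 0} ∩ J).indicator
          (fun j => (A.mulVec r ⬝ᵥ fun k => A k j) * r j) j)
      + ∑ j, ({i | u i ≠ 0} \ J).indicator
          (fun j => (A.mulVec r ⬝ᵥ fun k => A k j) * r j) j := by
    have hsum : ∑ i, (A.mulVec r) i ^ 2
        = ∑ j, (A.mulVec r ⬝ᵥ fun k => A k j) * r j := by
      rw [swap r]
      exact Finset.sum_congr rfl fun i _ => by ring
    rw [hsum, ← Finset.sum_add_distrib]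
    refine Finset.sum_congr rfl fun j _ => ?_
    by_cases hjS : r j ≠ 0
    · by_cases hjJ : j ∈ J
      · have hmem : j ∈ ({i | r i ≠ 0} ∩ J) := ⟨hjS, hjJ⟩
        rw [Set.indicator_of_mem hmem,
          Set.indicator_of_notMem (fun h => h.2 hjJ), add_zero]
      · have huj : u j ≠ 0 := by
          have : r j = u j := by simp [hr, hvz j hjJ]
          rw [this] at hjS
          exact hjS
        have hmem : j ∈ ({i | u i ≠ 0} \ J) := ⟨huj, hjJ⟩
        rw [Set.indicator_of_notMem (fun h => hjJ h.2),
          Set.indicator_of_mem hmem, zero_add]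
    · push_neg at hjS
      have h2 : j ∉ {i | u i ≠ 0} \ J := by
        intro h
        have : v j = 0 := hvz j h.2
        have : r j = u j := by simp [hr, this]
        exact h.1 (by rw [← this, hjS])
      rw [Set.indicator_of_notMem (fun h => h.1 (by simpa using hjS)),
        Set.indicator_of_notMem h2, hjS, mul_zero, add_zero]
  constructor
  · rw [part1]
    linarith
  · have hsq : 0 ≤ ∑ i, (A.mulVec r) i ^ 2 := Finset.sum_nonneg fun i _ => sq_nonneg _
    have := part2
    rw [part1] at this
    have hgoal : ∑ i, (A.mulVec r) i ^ 2 ≤ ∑ j, ({i | u i ≠ 0} \ J).indicator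
        (fun j => (A.mulVec r ⬝ᵥ fun k => A k j) * r j) j := by linarith
    exact hgoal
end

section
/- Let A ∈ ℝ^{m×4} have unit columns, let h_i := (⟨A_{•i}, A_{•1}⟩, ⟨A_{•i}, A_{•2}⟩, ⟨A_{•i}, A_{•3}⟩)ᵀ ∈ ℝ³ for i = 1,…,4, and let H := [h₄+h₁, h₄−h₁, h₄+h₂, h₄−h₂, h₄+h₃, h₄−h₃] ∈ ℝ^{3×6}. Then the following are equivalent: (a) max_{i=1,2,3} |h_iᵀ v| > |h₄ᵀ v| for every v = (v₁,v₂,v₃)ᵀ ∈ ℝ³ with v₁·v₂·v₃ ≠ 0; (b) for every sign vector σ = (σ₁,σ₂,σ₃) ∈ {−1,+1}³, there exist vectors u ∈ ℝ³ with u ≥ 0 and u ≠ 0, and w ∈ ℝ⁶ with w ≥ 0, such that u + D_σ H w = 0, where D_σ := diag(σ₁, σ₂, σ₃) ∈ ℝ^{3×3}. -/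
/-!
Write a vector with nonzero entries as `v = σ x` with `σ ∈ {±1}³` and `x > 0`. Since the columns
of `H` come in pairs `h₄ ± hᵢ`, the inequality `vᵀ H ≥ 0` says `|hᵢᵀ v| ≤ h₄ᵀ v` for `i = 1, 2, 3`;
together with the symmetry `v ↦ -v`, (a) says that no such `v` has `vᵀ H ≥ 0`, i.e. that for no `σ`
is there an `x > 0` with `xᵀ D_σ H ≥ 0`. By Motzkin's transposition theorem this is (b).

Motzkin's theorem follows by separating the compact set `-Δ` (`Δ` the standard simplex) from the
cone spanned by the columns of the matrix, which is closed since it is finitely generated.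
-/

open Set Filter Matrix
open scoped Pointwise

namespace PointedCone

section Module

variable {E : Type*} [AddCommGroup E] [Module ℝ E]

lemma mem_hull_insert {z x : E} {s : Set E} :
    x ∈ hull ℝ (insert z s) ↔ ∃ t : ℝ, 0 ≤ t ∧ x - t • z ∈ hull ℝ s := by
  rw [hull, Submodule.span_insert, Submodule.mem_sup]
  constructor
  · rintro ⟨_, hy, y, hys, rfl⟩
    obtain ⟨a, rfl⟩ := Submodule.mem_span_singleton.1 hy
    exact ⟨a, a.2, by simpa [Nonneg.mk_smul] using hys⟩
  · rintro ⟨t, ht, hx⟩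
    exact ⟨t • z, Submodule.mem_span_singleton.2 ⟨⟨t, ht⟩, rfl⟩, _, hx, add_sub_cancel _ _⟩

lemma hull_insert_eq_preimage {z : E} {s : Set E} (φ : E →ₗ[ℝ] ℝ) (hφ : φ z = 1)
    (hz : -z ∈ hull ℝ s) :
    (hull ℝ (insert z s) : Set E) =
      (fun x ↦ x - φ x • z) ⁻¹' hull ℝ ((fun x ↦ x - φ x • z) '' s) := by
  set P : E →ₗ[ℝ] E := LinearMap.id - φ.smulRight z
  have hP : ∀ x, P x = x - φ x • z := fun x ↦ rfl
  have himage : hull ℝ ((fun x ↦ x - φ x • z) '' s) =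
      Submodule.map (P.restrictScalars {c : ℝ // 0 ≤ c}) (hull ℝ s) :=
    Submodule.span_image (P.restrictScalars {c : ℝ // 0 ≤ c})
  ext x
  rw [SetLike.mem_coe, mem_hull_insert, mem_preimage, SetLike.mem_coe, himage, Submodule.mem_map]
  constructor
  · rintro ⟨t, -, hx⟩
    refine ⟨_, hx, ?_⟩
    simp [hP, hφ, sub_smul]
  · rintro ⟨y, hy, hPy⟩
    obtain ⟨c, rfl⟩ : ∃ c : ℝ, x = y + c • z := by
      simp only [LinearMap.coe_restrictScalars, hP] at hPy
      exact ⟨φ x - φ y, by linear_combination (norm := module) -hPy⟩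
    rcases le_or_gt 0 c with hc | hc
    · exact ⟨c, hc, by rwa [add_sub_cancel_right]⟩
    · -- a negative coefficient of `z` is absorbed by `-z ∈ hull ℝ s`
      refine ⟨0, le_rfl, ?_⟩
      rw [zero_smul, sub_zero, ← neg_smul_neg]
      exact add_mem hy (smul_mem _ (neg_pos.2 hc).le hz)

end Module

variable {E : Type*} [NormedAddCommGroup E] [NormedSpace ℝ E]

lemma isClosed_hull_insert_of_neg_notMem {z : E} {s : Set E} (hs : IsClosed (hull ℝ s : Set E))
    (hz : -z ∉ hull ℝ s) : IsClosed (hull ℝ (insert z s) : Set E) := by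
  -- A functional separating `-z` from `hull ℝ s` bounds the coefficient of `z`.
  obtain ⟨f, hf, hfz⟩ := ProperCone.hyperplane_separation_point ⟨hull ℝ s, hs⟩ hz
  have hfz : 0 < f z := by simpa using hfz
  refine IsSeqClosed.isClosed fun u x hu hux ↦ ?_
  choose t ht hut using fun k ↦ mem_hull_insert.1 (hu k)
  have htf : ∀ k, t k ≤ f (u k) / f z := fun k ↦ by
    rw [le_div_iff₀ hfz]
    simpa using hf _ (hut k)
  obtain ⟨B, hB⟩ := (((f.continuous.tendsto x).comp hux).div_const (f z)).bddAbove_range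
  obtain ⟨τ, hτ, φ, hφ, htφ⟩ := isCompact_Icc.tendsto_subseq
    (fun k ↦ ⟨ht k, (htf k).trans (hB ⟨k, rfl⟩)⟩ : ∀ k, t k ∈ Icc 0 B)
  exact mem_hull_insert.2 ⟨τ, hτ.1, hs.mem_of_tendsto ((hux.comp hφ.tendsto_atTop).sub
    (htφ.smul_const z)) (Eventually.of_forall fun k ↦ hut (φ k))⟩

theorem isClosed_hull_of_finite {s : Set E} (hs : s.Finite) : IsClosed (hull ℝ s : Set E) := by
  classical
  -- The induction must cover all generating sets of a given size: in the case `-z ∈ hull ℝ s`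
  -- it is applied to the projection of `s` along `z`.
  suffices ∀ n (t : Finset E), t.card ≤ n → IsClosed (hull ℝ (t : Set E) : Set E) by
    simpa using this _ hs.toFinset le_rfl
  intro n
  induction n with
  | zero =>
    intro t ht
    rw [Finset.card_eq_zero.1 (Nat.le_zero.1 ht)]
    simp
  | succ n ih =>
    intro t ht
    rcases ht.lt_or_eq with ht | ht
    · exact ih t (Nat.lt_succ_iff.1 ht)
    obtain ⟨z, s, -, rfl, rfl⟩ := Finset.card_eq_succ.1 ht
    rw [Finset.coe_insert]
    by_cases hz : -z ∈ hull ℝ (s : Set E)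
    · rcases eq_or_ne z 0 with rfl | hz0
      · simpa [Submodule.span_insert_zero] using ih s le_rfl
      obtain ⟨φ, hφ⟩ := SeparatingDual.exists_eq_one (R := ℝ) hz0
      rw [hull_insert_eq_preimage (φ : E →ₗ[ℝ] ℝ) hφ hz]
      have := ih (s.image fun x ↦ x - φ x • z) Finset.card_image_le
      rw [Finset.coe_image] at this
      exact this.preimage (by fun_prop)
    · exact isClosed_hull_insert_of_neg_notMem (ih s le_rfl) hz

end PointedCone

namespace Matrix

variable {m n : Type*}

lemma exists_mulVec_eq_of_mem_hull_range_col [Fintype n] {M : Matrix m n ℝ} {y : m → ℝ}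
    (hy : y ∈ PointedCone.hull ℝ (range M.col)) : ∃ w, (∀ j, 0 ≤ w j) ∧ M *ᵥ w = y := by
  obtain ⟨c, rfl⟩ := (Submodule.mem_span_range_iff_exists_fun _).1 hy
  refine ⟨fun j ↦ c j, fun j ↦ (c j).2, ?_⟩
  ext k
  simp [mulVec, dotProduct, Finset.sum_apply, ← Nonneg.coe_smul, mul_comm]

theorem motzkin_transposition [Fintype m] [Fintype n] (M : Matrix m n ℝ) :
    (∃ (u : m → ℝ) (w : n → ℝ), (∀ k, 0 ≤ u k) ∧ u ≠ 0 ∧ (∀ j, 0 ≤ w j) ∧ u + M *ᵥ w = 0) ↔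
      ¬ ∃ x : m → ℝ, (∀ k, 0 < x k) ∧ ∀ j, 0 ≤ (x ᵥ* M) j := by
  classical
  refine ⟨fun ⟨u, w, hu, hu0, hw, huw⟩ ⟨x, hx, hxM⟩ ↦ ?_, fun hx ↦ by_contra fun hM ↦ hx ?_⟩
  · have hxu : 0 < x ⬝ᵥ u := by
      obtain ⟨k, hk⟩ := Function.ne_iff.1 hu0
      exact Finset.sum_pos' (fun k _ ↦ mul_nonneg (hx k).le (hu k))
        ⟨k, Finset.mem_univ _, mul_pos (hx k) ((hu k).lt_of_ne' hk)⟩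
    have hxMw : 0 ≤ x ⬝ᵥ (M *ᵥ w) := by
      rw [dotProduct_mulVec]
      exact Finset.sum_nonneg fun j _ ↦ mul_nonneg (hxM j) (hw j)
    have := congrArg (x ⬝ᵥ ·) huw
    simp only [dotProduct_add, dotProduct_zero] at this
    linarith
  · let C : ProperCone ℝ (m → ℝ) :=
      ⟨PointedCone.hull ℝ (range M.col), PointedCone.isClosed_hull_of_finite (finite_range _)⟩
    have hdisj : Disjoint (-stdSimplex ℝ m) (C : Set (m → ℝ)) := by
      refine Set.disjoint_left.2 fun y hy hyC ↦ hM ?_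
      obtain ⟨w, hw, hMw⟩ := exists_mulVec_eq_of_mem_hull_range_col hyC
      refine ⟨-y, w, hy.1, fun h ↦ ?_, hw, by rw [hMw, neg_add_cancel]⟩
      simpa [neg_eq_zero.1 h] using hy.2
    obtain ⟨f, hfC, hfK⟩ := C.hyperplane_separation (convex_stdSimplex ℝ m).neg
      (isCompact_stdSimplex ℝ m).neg hdisj
    refine ⟨fun k ↦ f (Pi.single k 1), fun k ↦ ?_, fun j ↦ ?_⟩
    · simpa using hfK (-Pi.single k 1) (by simpa using single_mem_stdSimplex ℝ k)
    · convert hfC (M.col j) (PointedCone.subset_hull ⟨j, rfl⟩) using 1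
      change ∑ k, f (Pi.single k 1) * M k j = f (M.col j)
      rw [← Finset.univ_sum_single (M.col j), map_sum]
      refine Finset.sum_congr rfl fun k _ ↦ ?_
      rw [col_apply, mul_comm, ← smul_eq_mul, ← map_smul, ← Pi.single_smul', smul_eq_mul, mul_one]

theorem exists_sign_exists_pos_vecMul_nonneg_iff [Fintype m] [DecidableEq m] (H : Matrix m n ℝ) :
    (∃ σ : m → ℝ, (∀ k, σ k = 1 ∨ σ k = -1) ∧
      ∃ x : m → ℝ, (∀ k, 0 < x k) ∧ ∀ j, 0 ≤ (x ᵥ* (diagonal σ * H)) j) ↔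
    ∃ v : m → ℝ, (∀ k, v k ≠ 0) ∧ ∀ j, 0 ≤ (v ᵥ* H) j := by
  have hdiag : ∀ σ x : m → ℝ, x ᵥ* (diagonal σ * H) = (x * σ) ᵥ* H := fun σ x ↦ by
    rw [← vecMul_vecMul]
    congr 1
    ext k
    exact vecMul_diagonal x σ k
  simp_rw [hdiag]
  constructor
  · rintro ⟨σ, hσ, x, hx, hxH⟩
    refine ⟨x * σ, fun k ↦ mul_ne_zero (hx k).ne' ?_, hxH⟩
    rcases hσ k with h | h <;> simp [h]
  · rintro ⟨v, hv, hvH⟩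
    refine ⟨fun k ↦ SignType.sign (v k), fun k ↦ ?_, fun k ↦ |v k|, fun k ↦ abs_pos.2 (hv k), ?_⟩
    · rcases (hv k).lt_or_gt with h | h <;> simp [sign_neg, sign_pos, h]
    · convert hvH
      ext k
      exact abs_mul_sign (v k)

end Matrix

section

variable {h : Fin 4 → Fin 3 → ℝ} {H : Matrix (Fin 3) (Fin 6) ℝ}

lemma vecMul_nonneg_iff_max_abs_le (hH : ∀ k : Fin 3,
      H k 0 = h 3 k + h 0 k ∧ H k 1 = h 3 k - h 0 k ∧
      H k 2 = h 3 k + h 1 k ∧ H k 3 = h 3 k - h 1 k ∧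
      H k 4 = h 3 k + h 2 k ∧ H k 5 = h 3 k - h 2 k) (v : Fin 3 → ℝ) :
    (∀ j, 0 ≤ (v ᵥ* H) j) ↔ max |h 0 ⬝ᵥ v| (max |h 1 ⬝ᵥ v| |h 2 ⬝ᵥ v|) ≤ h 3 ⬝ᵥ v := by
  have hcol : ∀ j (c : Fin 3 → ℝ), (∀ k, H k j = c k) → (v ᵥ* H) j = c ⬝ᵥ v := fun j c hc ↦ by
    simp [vecMul, dotProduct, hc, mul_comm]
  have col0 := hcol 0 (h 3 + h 0) fun k ↦ (hH k).1
  have col1 := hcol 1 (h 3 - h 0) fun k ↦ (hH k).2.1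
  have col2 := hcol 2 (h 3 + h 1) fun k ↦ (hH k).2.2.1
  have col3 := hcol 3 (h 3 - h 1) fun k ↦ (hH k).2.2.2.1
  have col4 := hcol 4 (h 3 + h 2) fun k ↦ (hH k).2.2.2.2.1
  have col5 := hcol 5 (h 3 - h 2) fun k ↦ (hH k).2.2.2.2.2
  simp only [add_dotProduct, sub_dotProduct] at col0 col1 col2 col3 col4 col5
  rw [max_le_iff, max_le_iff, abs_le, abs_le, abs_le]
  constructor
  · intro hv
    refine ⟨⟨?_, ?_⟩, ⟨?_, ?_⟩, ?_, ?_⟩ <;> linarith [hv 0, hv 1, hv 2, hv 3, hv 4, hv 5]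
  · rintro ⟨⟨lo0, hi0⟩, ⟨lo1, hi1⟩, lo2, hi2⟩ j
    fin_cases j <;> simp only [Fin.zero_eta, Fin.mk_one, Fin.reduceFinMk] <;> linarith

lemma forall_abs_lt_max_iff (hH : ∀ k : Fin 3,
      H k 0 = h 3 k + h 0 k ∧ H k 1 = h 3 k - h 0 k ∧
      H k 2 = h 3 k + h 1 k ∧ H k 3 = h 3 k - h 1 k ∧
      H k 4 = h 3 k + h 2 k ∧ H k 5 = h 3 k - h 2 k) :
    (∀ v : Fin 3 → ℝ, v 0 * v 1 * v 2 ≠ 0 →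
        |h 3 ⬝ᵥ v| < max (|h 0 ⬝ᵥ v|) (max (|h 1 ⬝ᵥ v|) (|h 2 ⬝ᵥ v|))) ↔
      ∀ v : Fin 3 → ℝ, (∀ k, v k ≠ 0) → ¬ ∀ j, 0 ≤ (v ᵥ* H) j := by
  have hprod : ∀ v : Fin 3 → ℝ, v 0 * v 1 * v 2 ≠ 0 ↔ ∀ k, v k ≠ 0 := fun v ↦ by
    simp [Fin.forall_fin_succ, and_assoc]
  simp_rw [hprod, vecMul_nonneg_iff_max_abs_le hH, not_le]
  refine ⟨fun ha v hv ↦ (le_abs_self _).trans_lt (ha v hv), fun hb v hv ↦ ?_⟩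
  rcases le_or_gt 0 (h 3 ⬝ᵥ v) with hpos | hneg
  · rw [abs_of_nonneg hpos]
    exact hb v hv
  · simpa [abs_of_neg hneg] using hb (-v) fun k ↦ neg_ne_zero.2 (hv k)

end

theorem stmt_14_general
    (h : Fin 4 → Fin 3 → ℝ)
    (H : Matrix (Fin 3) (Fin 6) ℝ)
    (hH : ∀ k : Fin 3,
      H k 0 = h 3 k + h 0 k ∧ H k 1 = h 3 k - h 0 k ∧
      H k 2 = h 3 k + h 1 k ∧ H k 3 = h 3 k - h 1 k ∧
      H k 4 = h 3 k + h 2 k ∧ H k 5 = h 3 k - h 2 k) :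
    ((∀ v : Fin 3 → ℝ, v 0 * v 1 * v 2 ≠ 0 →
        |h 3 ⬝ᵥ v| < max (|h 0 ⬝ᵥ v|) (max (|h 1 ⬝ᵥ v|) (|h 2 ⬝ᵥ v|))) ↔
      (∀ σ : Fin 3 → ℝ, (∀ k, σ k = 1 ∨ σ k = -1) →
        ∃ (u : Fin 3 → ℝ) (w : Fin 6 → ℝ),
          (∀ k, 0 ≤ u k) ∧ u ≠ 0 ∧ (∀ j, 0 ≤ w j) ∧
          u + (Matrix.diagonal σ).mulVec (H.mulVec w) = 0)) := by
  simp_rw [forall_abs_lt_max_iff hH, mulVec_mulVec, motzkin_transposition]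
  simpa only [not_exists, not_and] using (exists_sign_exists_pos_vecMul_nonneg_iff H).not.symm

/-- Equivalence between the strict-dominance property (𝐏) and the family of linear
feasibility conditions from Motzkin's transposition theorem (Lemma 5.4 of the paper).
Here `h i = (⟨A_{•i}, A_{•1}⟩, ⟨A_{•i}, A_{•2}⟩, ⟨A_{•i}, A_{•3}⟩)` for `i = 1,…,4`
(0-indexed), and `H = [h₄+h₁, h₄−h₁, h₄+h₂, h₄−h₂, h₄+h₃, h₄−h₃]`. -/
theorem stmt_14 {m : ℕ} (A : Matrix (Fin m) (Fin 4) ℝ)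
    (hunit : ∀ i : Fin 4, ∑ k, A k i ^ 2 = 1)
    (h : Fin 4 → Fin 3 → ℝ)
    (hh : ∀ (i : Fin 4) (k : Fin 3), h i k = (fun l => A l i) ⬝ᵥ (fun l => A l k.castSucc))
    (H : Matrix (Fin 3) (Fin 6) ℝ)
    (hH : ∀ k : Fin 3,
      H k 0 = h 3 k + h 0 k ∧ H k 1 = h 3 k - h 0 k ∧
      H k 2 = h 3 k + h 1 k ∧ H k 3 = h 3 k - h 1 k ∧
      H k 4 = h 3 k + h 2 k ∧ H k 5 = h 3 k - h 2 k) :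
    ((∀ v : Fin 3 → ℝ, v 0 * v 1 * v 2 ≠ 0 →
        |h 3 ⬝ᵥ v| < max (|h 0 ⬝ᵥ v|) (max (|h 1 ⬝ᵥ v|) (|h 2 ⬝ᵥ v|))) ↔
      (∀ σ : Fin 3 → ℝ, (∀ k, σ k = 1 ∨ σ k = -1) →
        ∃ (u : Fin 3 → ℝ) (w : Fin 6 → ℝ),
          (∀ k, 0 ≤ u k) ∧ u ≠ 0 ∧ (∀ j, 0 ≤ w j) ∧
          u + (Matrix.diagonal σ).mulVec (H.mulVec w) = 0)) :=
  stmt_14_general h H hH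
end

section
/- Let α, β, γ be real numbers such that the matrix U = [[α, γ], [γ, β]] ∈ ℝ^{2×2} is positive definite, and define W := { (u₁,u₂) ∈ ℝ² : u₁ > 0, u₂ > 0, and (α u₁ + γ u₂)₊ ≥ (γ u₁ + β u₂)₊ }. Then W is nonempty if and only if α > γ. Furthermore, if W is nonempty, then { u₂ : (u₁,u₂) ∈ W } = { t ∈ ℝ : t > 0 }. -/
open Matrix

/-- For a positive definite `U = [[α, γ], [γ, β]]` and
`W = {(u₁,u₂) : u₁ > 0, u₂ > 0, (α u₁ + γ u₂)₊ ≥ (γ u₁ + β u₂)₊}`,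
`W` is nonempty iff `α > γ`; moreover if `W` is nonempty then the set of second
coordinates of points of `W` is exactly `(0, ∞)`. -/
theorem stmt_16 (α β γ : ℝ)
    (hpd : ∀ x : Fin 2 → ℝ, x ≠ 0 → 0 < x ⬝ᵥ (!![α, γ; γ, β]).mulVec x)
    (W : Set (ℝ × ℝ))
    (hW : W = {p : ℝ × ℝ | 0 < p.1 ∧ 0 < p.2 ∧
      max (γ * p.1 + β * p.2) 0 ≤ max (α * p.1 + γ * p.2) 0}) :
    (W.Nonempty ↔ γ < α) ∧
    (W.Nonempty → Prod.snd '' W = {t : ℝ | 0 < t}) := by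
  have hα : 0 < α := by
    have := hpd ![1, 0] (by
      intro h
      have := congrFun h 0
      simp at this)
    simpa [Matrix.mulVec, dotProduct, Fin.sum_univ_two] using this
  have hβ : 0 < β := by
    have := hpd ![0, 1] (by
      intro h
      have := congrFun h 1
      simp at this)
    simpa [Matrix.mulVec, dotProduct, Fin.sum_univ_two] using this
  have hdet : γ ^ 2 < α * β := by
    have := hpd ![β, -γ] (by
      intro h
      have := congrFun h 0
      simp at this
      linarith)
    have h2 : 0 < β * (α * β - γ ^ 2) := by
      have h3 : ![β, -γ] ⬝ᵥ (!![α, γ; γ, β]).mulVec ![β, -γ]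
          = β * (α * β - γ ^ 2) := by
        simp [Matrix.mulVec, dotProduct, Fin.sum_univ_two]
        ring
      linarith [h3 ▸ this]
    nlinarith
  -- helper: for γ < α and any t > 0, construct a point of W with second coord t
  have key : γ < α → ∀ t : ℝ, 0 < t → ∃ u : ℝ, 0 < u ∧ (u, t) ∈ W := by
    intro hγα t ht
    refine ⟨max ((β - γ) * t / (α - γ)) 0 + 1, by positivity, ?_⟩
    rw [hW]
    refine ⟨by positivity, ht, ?_⟩
    set u := max ((β - γ) * t / (α - γ)) 0 + 1 with hu
    have hu1 : (β - γ) * t / (α - γ) < u := by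
      have := le_max_left ((β - γ) * t / (α - γ)) 0
      simp only [hu]; linarith
    have h5 : (β - γ) * t < (α - γ) * u := by
      have := (div_lt_iff₀ (by linarith : (0:ℝ) < α - γ)).mp hu1
      linarith
    have : γ * u + β * t ≤ α * u + γ * t := by nlinarith
    exact max_le_max this le_rfl
  constructor
  · constructor
    · rintro ⟨⟨u₁, u₂⟩, hmem⟩
      rw [hW] at hmem
      obtain ⟨h1, h2, h3⟩ := hmem
      by_contra hle
      push_neg at hle
      have hγ : 0 < γ := lt_of_lt_of_le hα hle
      have hγβ : γ < β := by nlinarith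
      have hL : 0 < γ * u₁ + β * u₂ := by positivity
      have h4 : γ * u₁ + β * u₂ ≤ max (α * u₁ + γ * u₂) 0 :=
        le_trans (le_max_left _ _) h3
      rcases le_max_iff.mp h4 with h5 | h5
      · nlinarith
      · linarith
    · intro hγα
      obtain ⟨u, _, hu⟩ := key hγα 1 one_pos
      exact ⟨(u, 1), hu⟩
  · intro hne
    have hγα : γ < α := by
      rcases hne with ⟨⟨u₁, u₂⟩, hmem⟩
      rw [hW] at hmem
      obtain ⟨h1, h2, h3⟩ := hmem
      by_contra hle
      push_neg at hle
      have hγ : 0 < γ := lt_of_lt_of_le hα hle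
      have hγβ : γ < β := by nlinarith
      have hL : 0 < γ * u₁ + β * u₂ := by positivity
      have h4 : γ * u₁ + β * u₂ ≤ max (α * u₁ + γ * u₂) 0 :=
        le_trans (le_max_left _ _) h3
      rcases le_max_iff.mp h4 with h5 | h5
      · nlinarith
      · linarith
    ext t
    simp only [Set.mem_image, Set.mem_setOf_eq]
    constructor
    · rintro ⟨⟨u₁, u₂⟩, hmem, rfl⟩
      rw [hW] at hmem
      exact hmem.2.1
    · intro ht
      obtain ⟨u, _, hu⟩ := key hγα t ht
      exact ⟨(u, t), hu, rfl⟩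
end

section
/- Let A ∈ ℝ^{4×4} be the matrix with rows (1, −1/3, −1/3, 1/3), (0, 2√2/3, −√2/3, √2/3), (0, 0, √6/3, −√6/12), and (0, 0, 0, √10/4), and let S = {1,2,3}. Then: (i) every column of A has unit Euclidean norm and A is invertible (in particular A_{•S} has full column rank); (ii) ‖(A_{•S}ᵀ A_{•S})⁻¹ A_{•S}ᵀ A_{•4}‖₁ = 1, where ‖·‖₁ denotes the (vector/matrix) 1-norm; (iii) for every z ∈ ℝ⁴ with z₄ = 0 and z₁·z₂·z₃ ≠ 0, one has max_{j∈{1,2,3}} |(AᵀA z)_j| > |(AᵀA z)₄|; (iv) for z = (1, 1, 0, 0)ᵀ, one has |(AᵀA z)₁| = |(AᵀA z)₂| = |(AᵀA z)₃| = |(AᵀA z)₄| = 2/3, so that max_{j∈{1,2,3}} |(AᵀA z)_j| = |(AᵀA z)₄| for this nonzero z whose support is a proper subset of S. -/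
/-!
The Gram matrix `G = AᵀA` has unit diagonal, and `A_Sᵀ a₄ = G_S x` with `x = (3, 3, -2)/8`,
so the exact recovery quantity is `‖x‖₁ = 1`. For `z` supported in `S` this gives
`(G z)₄ = xᵀ (G z)_S`, i.e. `8 (G z)₄ = 3 (G z)₁ + 3 (G z)₂ - 2 (G z)₃`, hence
`|(G z)₄| ≤ max_{j ∈ S} |(G z)_j|`, with equality only when `(G z)₁ = (G z)₂ = -(G z)₃`.
On vectors supported in `S` that equality case forces `z₃ = 0`, as for `z = (1, 1, 0, 0)`.
-/

open Matrix

noncomputable def ompCounterexample : Matrix (Fin 4) (Fin 4) ℝ :=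
  !![(1 : ℝ), -1/3, -1/3, 1/3;
     0, 2 * Real.sqrt 2 / 3, -(Real.sqrt 2) / 3, Real.sqrt 2 / 3;
     0, 0, Real.sqrt 6 / 3, -(Real.sqrt 6) / 12;
     0, 0, 0, Real.sqrt 10 / 4]

theorem ompCounterexample_gram :
    ompCounterexampleᵀ * ompCounterexample =
      !![1, -1/3, -1/3, 1/3; -1/3, 1, -1/3, 1/3; -1/3, -1/3, 1, -1/2; 1/3, 1/3, -1/2, 1] := by
  ext i j
  fin_cases i <;> fin_cases j <;>
    simp [ompCounterexample, mul_apply, Fin.sum_univ_four] <;> ring_nf <;> norm_num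

theorem ompCounterexample_det_ne_zero : ompCounterexample.det ≠ 0 := by
  rw [det_of_isUpperTriangular]
  · simp [ompCounterexample, Fin.prod_univ_four]
  · intro i j hij
    fin_cases i <;> fin_cases j <;> simp_all [ompCounterexample]

theorem ompCounterexample_sum_sq_col (j : Fin 4) : ∑ i, ompCounterexample i j ^ 2 = 1 := by
  have hjj := congr_fun₂ ompCounterexample_gram j j
  simp only [mul_apply, transpose_apply, ← sq] at hjj
  rw [hjj]
  fin_cases j <;> simp

theorem transpose_submatrix_mul_submatrix {m n k R : Type*} [Fintype m] [CommSemiring R]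
    (A : Matrix m n R) (f : k → n) :
    (A.submatrix id f)ᵀ * A.submatrix id f = (Aᵀ * A).submatrix f f := by
  ext i j; simp [mul_apply]

theorem transpose_submatrix_mulVec_col {m n k R : Type*} [Fintype m] [CommSemiring R]
    (A : Matrix m n R) (f : k → n) (j : n) :
    (A.submatrix id f)ᵀ *ᵥ (fun i => A i j) = fun l => (Aᵀ * A) (f l) j := by
  ext l; simp [mulVec, dotProduct, mul_apply]

theorem eq_of_max_abs_le_of_eight_mul_eq {p₁ p₂ p₃ p₄ : ℝ}
    (h : 8 * p₄ = 3 * p₁ + 3 * p₂ - 2 * p₃) (hle : max |p₁| (max |p₂| |p₃|) ≤ |p₄|) :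
    p₁ = p₂ ∧ p₃ = -p₁ := by
  simp only [max_le_iff, abs_le] at hle
  obtain ⟨⟨l₁, u₁⟩, ⟨l₂, u₂⟩, ⟨l₃, u₃⟩⟩ := hle
  rcases abs_cases p₄ with ⟨h₄, -⟩ | ⟨h₄, -⟩ <;> constructor <;> linarith

theorem abs_lt_max_abs_of_eight_mul_eq {p₁ p₂ p₃ p₄ : ℝ}
    (h : 8 * p₄ = 3 * p₁ + 3 * p₂ - 2 * p₃) (hne : ¬(p₁ = p₂ ∧ p₃ = -p₁)) :
    |p₄| < max |p₁| (max |p₂| |p₃|) :=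
  lt_of_not_ge fun hle => hne (eq_of_max_abs_le_of_eight_mul_eq h hle)

theorem ompCounterexample_gram_mulVec {z : Fin 4 → ℝ} (hz : z 3 = 0) :
    (ompCounterexampleᵀ * ompCounterexample) *ᵥ z =
      ![z 0 - z 1 / 3 - z 2 / 3, -z 0 / 3 + z 1 - z 2 / 3, -z 0 / 3 - z 1 / 3 + z 2,
        z 0 / 3 + z 1 / 3 - z 2 / 2] := by
  ext i
  fin_cases i <;> simp [ompCounterexample_gram, mulVec, dotProduct, Fin.sum_univ_four, hz] <;> ring

theorem ompCounterexample_erc_coefficients :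
    let A_S := ompCounterexample.submatrix id (Fin.castSucc : Fin 3 → Fin 4)
    (A_Sᵀ * A_S)⁻¹ *ᵥ (A_Sᵀ *ᵥ fun i => ompCounterexample i 3) = ![3/8, 3/8, -1/4] := by
  intro A_S
  set G_S : Matrix (Fin 3) (Fin 3) ℝ := !![1, -1/3, -1/3; -1/3, 1, -1/3; -1/3, -1/3, 1]
  have hG_S : A_Sᵀ * A_S = G_S := by
    rw [transpose_submatrix_mul_submatrix, ompCounterexample_gram]
    ext i j
    fin_cases i <;> fin_cases j <;> rfl
  have hb : A_Sᵀ *ᵥ (fun i => ompCounterexample i 3) = G_S *ᵥ ![3/8, 3/8, -1/4] := by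
    rw [transpose_submatrix_mulVec_col, ompCounterexample_gram]
    ext k
    fin_cases k <;> simp [G_S, mulVec, dotProduct, Fin.sum_univ_three] <;> norm_num
  have : Invertible G_S := invertibleOfIsUnitDet _ (by simp [G_S, det_fin_three]; norm_num)
  rw [hG_S, hb, inv_mulVec_eq_vec rfl]

/-- The counterexample matrix of Theorem 5.5: `A` has unit columns and is invertible
(so `A_{•S}`, `S = {1,2,3}`, has full column rank),
`‖(A_{•S}ᵀ A_{•S})⁻¹ A_{•S}ᵀ A_{•4}‖₁ = 1`, every `z` supported exactly on `S`
satisfies the strict OMP selection inequality, yet for `z = (1,1,0,0)ᵀ` (supported on a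
proper subset of `S`) all four components of `AᵀA z` have absolute value `2/3`. -/
theorem stmt_17 (A : Matrix (Fin 4) (Fin 4) ℝ)
    (hA : A = !![(1 : ℝ), -1/3, -1/3, 1/3;
                 0, 2 * Real.sqrt 2 / 3, -(Real.sqrt 2) / 3, Real.sqrt 2 / 3;
                 0, 0, Real.sqrt 6 / 3, -(Real.sqrt 6) / 12;
                 0, 0, 0, Real.sqrt 10 / 4]) :
    (∀ j : Fin 4, ∑ i, A i j ^ 2 = 1) ∧
    A.det ≠ 0 ∧
    LinearIndependent ℝ (fun j : Fin 3 => (fun i => A i (Fin.castSucc j))) ∧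
    (∑ k : Fin 3,
      |(((A.submatrix id (Fin.castSucc : Fin 3 → Fin 4)).transpose *
          (A.submatrix id (Fin.castSucc : Fin 3 → Fin 4)))⁻¹.mulVec
        ((A.submatrix id (Fin.castSucc : Fin 3 → Fin 4)).transpose.mulVec
          (fun i => A i 3))) k| = 1) ∧
    (∀ z : Fin 4 → ℝ, z 3 = 0 → z 0 * z 1 * z 2 ≠ 0 →
      |(A.transpose * A).mulVec z 3| <
        max (|(A.transpose * A).mulVec z 0|)
          (max (|(A.transpose * A).mulVec z 1|) (|(A.transpose * A).mulVec z 2|))) ∧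
    (∀ j : Fin 4, |(A.transpose * A).mulVec ![1, 1, 0, 0] j| = 2/3) := by
  rw [← ompCounterexample] at hA
  subst hA
  refine ⟨ompCounterexample_sum_sq_col, ompCounterexample_det_ne_zero,
    (linearIndependent_cols_of_det_ne_zero ompCounterexample_det_ne_zero).comp _
      (Fin.castSucc_injective 3), ?_, fun z hz₃ hz => ?_, fun j => ?_⟩
  · rw [ompCounterexample_erc_coefficients]
    simp [Fin.sum_univ_three]
    norm_num
  · have hGz := ompCounterexample_gram_mulVec hz₃
    refine abs_lt_max_abs_of_eight_mul_eq ?_ ?_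
    · simp only [hGz, cons_val]
      ring
    · rintro ⟨h₀₁, h₂₀⟩
      simp only [hGz, cons_val] at h₀₁ h₂₀
      exact right_ne_zero_of_mul hz (by linarith)
  · rw [ompCounterexample_gram]
    fin_cases j <;> simp [mulVec, dotProduct, Fin.sum_univ_four] <;> norm_num
end

section
/- Let ℐ₁, ℐ₊, ℐ₋ be pairwise disjoint index sets whose union is {1,…,N}, and let P = { x ∈ ℝ^N : x_i ≥ 0 for i ∈ ℐ₊, x_i ≤ 0 for i ∈ ℐ₋ }. Let A ∈ ℝ^{m×N} have unit columns and let K ∈ ℕ. Suppose there exist constants δ ∈ (0,1) and θ > 0 such that for all u, v ∈ Σ_K ∩ P with supp(v) ⊊ supp(u): (a) (1 − δ)·‖u − v‖₂² ≤ ‖A(u − v)‖₂², and (b) max( max_{j ∈ [supp(u)]^c ∩ ℐ₁} |⟨A(u−v), A_{•j}⟩|, max_{j ∈ [supp(u)]^c ∩ ℐ₊} (⟨A(u−v), A_{•j}⟩)₊, max_{j ∈ [supp(u)]^c ∩ ℐ₋} (⟨A(u−v), A_{•j}⟩)₋ ) ≤ θ·‖u − v‖₂. If 1 − δ > √K ·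 θ, then condition (H) holds on P: for every nonzero u ∈ Σ_K ∩ P, every index set 𝒥 ⊊ supp(u) (possibly empty), and every optimal solution v of min_w ‖A(u − w)‖₂² subject to w ∈ P and supp(w) ⊆ 𝒥, one has min_{j ∈ supp(u) \ 𝒥} f*_j(u,v) < min_{j ∈ [supp(u)]^c} f*_j(u,v). -/
open Matrix Set

set_option maxHeartbeats 1600000 in
/-- Corollary 6.2: for the closed, convex, CP admissible cone
`P = ℝ_{ℐ₁} × (ℝ₊)_{ℐ₊} × (ℝ₋)_{ℐ₋}`, if a restricted isometry-like constant `δ` and a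
restricted orthogonality-like constant `θ` exist with `1 − δ > √K · θ`, then condition
(H) holds on `P`: for every nonzero `u ∈ Σ_K ∩ P`, every `J ⊊ supp(u)`, and every
optimal solution `v` of `min ‖A(u−w)‖₂²` over `w ∈ P`, `supp(w) ⊆ J`, one has
`min_{j ∈ supp(u)\J} f*_j(u,v) < min_{j ∈ supp(u)ᶜ} f*_j(u,v)`. -/
theorem stmt_18 {N m K : ℕ}
    (I₁ Ip Im : Set (Fin N))
    (hd₁ : Disjoint I₁ Ip) (hd₂ : Disjoint I₁ Im) (hd₃ : Disjoint Ip Im)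
    (hun : I₁ ∪ Ip ∪ Im = Set.univ)
    (P : Set (Fin N → ℝ))
    (hP : P = {x : Fin N → ℝ | (∀ i ∈ Ip, 0 ≤ x i) ∧ (∀ i ∈ Im, x i ≤ 0)})
    (A : Matrix (Fin m) (Fin N) ℝ)
    (hunit : ∀ j : Fin N, ∑ i, A i j ^ 2 = 1)
    (δ θ : ℝ) (hδ0 : 0 < δ) (hδ1 : δ < 1) (hθ : 0 < θ)
    (ha : ∀ u ∈ P, ∀ v ∈ P, {i | u i ≠ 0}.ncard ≤ K → {i | v i ≠ 0}.ncard ≤ K →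
      {i | v i ≠ 0} ⊂ {i | u i ≠ 0} →
      (1 - δ) * (∑ i, (u - v) i ^ 2) ≤ ∑ i, (A.mulVec (u - v)) i ^ 2)
    (hb : ∀ u ∈ P, ∀ v ∈ P, {i | u i ≠ 0}.ncard ≤ K → {i | v i ≠ 0}.ncard ≤ K →
      {i | v i ≠ 0} ⊂ {i | u i ≠ 0} →
      ∀ j : Fin N, u j = 0 →
        (j ∈ I₁ → |A.mulVec (u - v) ⬝ᵥ (fun k => A k j)| ≤
            θ * Real.sqrt (∑ i, (u - v) i ^ 2)) ∧
        (j ∈ Ip → max (A.mulVec (u - v) ⬝ᵥ (fun k => A k j)) 0 ≤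
            θ * Real.sqrt (∑ i, (u - v) i ^ 2)) ∧
        (j ∈ Im → max (-(A.mulVec (u - v) ⬝ᵥ (fun k => A k j))) 0 ≤
            θ * Real.sqrt (∑ i, (u - v) i ^ 2)))
    (hmain : 1 - δ > Real.sqrt K * θ) :
    ∀ u : Fin N → ℝ, u ≠ 0 → u ∈ P → {i | u i ≠ 0}.ncard ≤ K →
      ∀ J : Set (Fin N), J ⊂ {i | u i ≠ 0} →
        ∀ v ∈ P, {i | v i ≠ 0} ⊆ J →
          (∀ w ∈ P, {i | w i ≠ 0} ⊆ J →
            ∑ i, (A.mulVec (u - v)) i ^ 2 ≤ ∑ i, (A.mulVec (u - w)) i ^ 2) →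
          ∃ j₀ ∈ {i | u i ≠ 0} \ J, ∀ j : Fin N, u j = 0 →
            fstar A P u v j₀ < fstar A P u v j := by
  classical
  intro u hu0 huP huK J hJ v hvP hvJ hopt
  set X : Fin m → ℝ := A.mulVec (u - v) with hX
  set c : Fin N → ℝ := fun j => ∑ i, X i * A i j with hc
  set R : ℝ := ∑ i, X i ^ 2 with hR
  set Dsq : ℝ := ∑ i, (u - v) i ^ 2 with hDsq
  set Dn : ℝ := Real.sqrt Dsq with hDn
  have hdot : ∀ j : Fin N, A.mulVec (u - v) ⬝ᵥ (fun k => A k j) = c j := by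
    intro j
    simp only [hc, hX, dotProduct]
  have huP' : (∀ i ∈ Ip, 0 ≤ u i) ∧ (∀ i ∈ Im, u i ≤ 0) := by rw [hP] at huP; exact huP
  have hvP' : (∀ i ∈ Ip, 0 ≤ v i) ∧ (∀ i ∈ Im, v i ≤ 0) := by rw [hP] at hvP; exact hvP
  have hvu : {i | v i ≠ 0} ⊂ {i | u i ≠ 0} := lt_of_le_of_lt hvJ hJ
  have hvK : {i | v i ≠ 0}.ncard ≤ K :=
    le_trans (Set.ncard_le_ncard hvu.subset (Set.toFinite _)) huK
  have hvz : ∀ i, i ∉ J → v i = 0 := by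
    intro i hi; by_contra h; exact hi (hvJ h)
  have hdz : ∀ i, i ∉ J → (u - v) i = u i := by
    intro i hi; simp [hvz i hi]
  have happ : ∀ (j : Fin N) (t : ℝ) (i : Fin N),
      (v + t • (Pi.single j (1 : ℝ) : Fin N → ℝ)) i = if i = j then v j + t else v i := by
    intro j t i
    by_cases h : i = j <;> simp [h, Pi.single_apply]
  obtain ⟨i0, hi0u, hi0J⟩ := Set.exists_of_ssubset hJ
  have hi0u' : u i0 ≠ 0 := hi0u
  have hDsq_pos : 0 < Dsq := by
    rw [hDsq]
    apply Finset.sum_pos' (fun i _ => sq_nonneg _)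
    refine ⟨i0, Finset.mem_univ _, ?_⟩
    rw [hdz i0 hi0J]
    positivity
  have hDn_pos : 0 < Dn := Real.sqrt_pos.mpr hDsq_pos
  have hDn_sq : Dn ^ 2 = Dsq := Real.sq_sqrt hDsq_pos.le
  have hθDn : 0 ≤ θ * Dn := le_of_lt (mul_pos hθ hDn_pos)
  have hRIP : (1 - δ) * Dsq ≤ R := ha u huP v hvP huK hvK hvu
  -- expansion of the integrand of fstar
  have hexp : ∀ (j : Fin N) (t : ℝ),
      (∑ i, (A.mulVec (u - v) i - t * A i j) ^ 2) = R - 2 * t * c j + t ^ 2 := by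
    intro j t
    have h1 : ∀ i, (A.mulVec (u - v) i - t * A i j) ^ 2
        = A.mulVec (u - v) i ^ 2 - 2 * t * (A.mulVec (u - v) i * A i j)
          + t ^ 2 * A i j ^ 2 := fun i => by ring
    simp only [h1]
    rw [Finset.sum_add_distrib, Finset.sum_sub_distrib, ← Finset.mul_sum, ← Finset.mul_sum,
      hunit j]
    simp only [hR, hc, hX]
    ring
  -- value of the objective at v + s • e_j
  have hval : ∀ (j : Fin N) (s : ℝ),
      (∑ i, (A.mulVec (u - (v + s • (Pi.single j (1 : ℝ) : Fin N → ℝ)))) i ^ 2)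
        = R - 2 * s * c j + s ^ 2 := by
    intro j s
    have h1 : ∀ i, A.mulVec (u - (v + s • (Pi.single j (1 : ℝ) : Fin N → ℝ))) i
        = A.mulVec (u - v) i - s * A i j := by
      intro i
      rw [sub_add_eq_sub_sub, Matrix.mulVec_sub, Matrix.mulVec_smul]
      simp [Matrix.mulVec_single]
    rw [Finset.sum_congr rfl fun i _ => by rw [h1 i]]
    exact hexp j s
  -- KKT conditions on J
  have hKKT : ∀ j ∈ J, (u - v) j * c j ≤ 0 := by
    intro j hjJ
    by_contra hpos'
    push_neg at hpos'
    have hpos : 0 < (u - v) j * c j := hpos'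
    have hdj : (u - v) j ≠ 0 := by
      intro h; rw [h, zero_mul] at hpos; exact lt_irrefl 0 hpos
    have hdj2 : 0 < (u - v) j ^ 2 := by positivity
    have hcd : 0 < c j / (u - v) j := by
      have heq : ((u - v) j * c j) / ((u - v) j ^ 2) = c j / (u - v) j := by
        rw [sq, mul_div_mul_left _ _ hdj]
      rw [← heq]; exact div_pos hpos hdj2
    set t : ℝ := min 1 (c j / (u - v) j) with ht
    have ht_pos : 0 < t := lt_min one_pos hcd
    have ht_le1 : t ≤ 1 := min_le_left _ _
    have ht_le : t * (u - v) j ^ 2 ≤ (u - v) j * c j := by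
      have h1 : t ≤ c j / (u - v) j := min_le_right _ _
      have h2 : t * (u - v) j ^ 2 ≤ (c j / (u - v) j) * (u - v) j ^ 2 :=
        mul_le_mul_of_nonneg_right h1 hdj2.le
      have h3 : (c j / (u - v) j) * (u - v) j ^ 2 = (u - v) j * c j := by
        rw [sq, ← mul_assoc, div_mul_cancel₀ _ hdj, mul_comm]
      linarith [h2, h3.le]
    set s : ℝ := t * (u - v) j with hs
    set w : Fin N → ℝ := v + s • (Pi.single j (1 : ℝ) : Fin N → ℝ) with hw
    have hconv : v j + s = (1 - t) * v j + t * u j := by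
      rw [hs]; simp only [Pi.sub_apply]; ring
    have hwP : w ∈ P := by
      rw [hP]
      constructor
      · intro i hiIp
        rw [hw, happ j s i]
        by_cases h : i = j
        · subst h
          rw [if_pos rfl, hconv]
          have h1 : 0 ≤ v i := hvP'.1 i hiIp
          have h2 : 0 ≤ u i := huP'.1 i hiIp
          nlinarith
        · rw [if_neg h]; exact hvP'.1 i hiIp
      · intro i hiIm
        rw [hw, happ j s i]
        by_cases h : i = j
        · subst h
          rw [if_pos rfl, hconv]
          have h1 : v i ≤ 0 := hvP'.2 i hiIm
          have h2 : u i ≤ 0 := huP'.2 i hiIm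
          nlinarith
        · rw [if_neg h]; exact hvP'.2 i hiIm
    have hwsupp : {i | w i ≠ 0} ⊆ J := by
      intro i hi
      simp only [Set.mem_setOf_eq] at hi
      rw [hw, happ j s i] at hi
      by_cases h : i = j
      · rw [h]; exact hjJ
      · rw [if_neg h] at hi
        exact hvJ hi
    have hO := hopt w hwP hwsupp
    rw [hw] at hO
    rw [hval j s] at hO
    have hO' : 2 * s * c j ≤ s ^ 2 := by linarith [hO]
    have e1 : 2 * s * c j = 2 * (t * ((u - v) j * c j)) := by rw [hs]; ring
    have e2 : s ^ 2 = t * (t * (u - v) j ^ 2) := by rw [hs]; ring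
    nlinarith [mul_le_mul_of_nonneg_left ht_le ht_pos.le, mul_pos ht_pos hpos]
  -- sum identity
  have hsum : (∑ j, (u - v) j * c j) = R := by
    have key : ∀ i, X i = ∑ j, A i j * (u - v) j := by
      intro i
      rw [hX]
      simp [Matrix.mulVec, dotProduct]
    have h1 : ∀ j, (u - v) j * c j = ∑ i, X i * A i j * (u - v) j := by
      intro j
      simp only [hc]
      rw [Finset.mul_sum]
      exact Finset.sum_congr rfl fun i _ => by ring
    rw [Finset.sum_congr rfl fun j _ => h1 j, Finset.sum_comm]
    rw [hR]
    refine Finset.sum_congr rfl fun i _ => ?_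
    have h2 : (∑ j, X i * A i j * (u - v) j) = X i * ∑ j, A i j * (u - v) j := by
      rw [Finset.mul_sum]
      exact Finset.sum_congr rfl fun j _ => by ring
    rw [h2, ← key i]
    ring
  clear_value X c R Dsq Dn
  -- split the sum
  set Sfin : Finset (Fin N) := Finset.univ.filter (fun j => u j ≠ 0 ∧ j ∉ J) with hSfin
  have hsplit : (1 - δ) * Dsq ≤ ∑ j ∈ Sfin, (u - v) j * c j := by
    have h1 := Finset.sum_filter_add_sum_filter_not Finset.univ
      (fun j => u j ≠ 0 ∧ j ∉ J) (fun j => (u - v) j * c j)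
    have h2 : (∑ j ∈ Finset.univ.filter (fun j => ¬(u j ≠ 0 ∧ j ∉ J)),
        (u - v) j * c j) ≤ 0 := by
      apply Finset.sum_nonpos
      intro j hjmem
      rw [Finset.mem_filter] at hjmem
      have hnot := hjmem.2
      by_cases hjJ : j ∈ J
      · exact hKKT j hjJ
      · have hj0 : u j = 0 := by
          by_contra h
          exact hnot ⟨h, hjJ⟩
        rw [hdz j hjJ, hj0, zero_mul]
    have h3 : (∑ j ∈ Sfin, (u - v) j * c j)
        + (∑ j ∈ Finset.univ.filter (fun j => ¬(u j ≠ 0 ∧ j ∉ J)), (u - v) j * c j) = R := by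
      rw [hSfin]
      exact h1.trans hsum
    linarith
  -- extract a good coordinate
  have hex : ∃ j₀ ∈ Sfin, θ * Dn * |(u - v) j₀| < (u - v) j₀ * c j₀ := by
    by_contra h
    push_neg at h
    have h2 : (∑ j ∈ Sfin, (u - v) j * c j) ≤ θ * Dn * ∑ j ∈ Sfin, |(u - v) j| := by
      rw [Finset.mul_sum]
      exact Finset.sum_le_sum fun j hj => h j hj
    have h3 : (∑ j ∈ Sfin, |(u - v) j|) ^ 2 ≤ (Sfin.card : ℝ) * ∑ j ∈ Sfin, |(u - v) j| ^ 2 :=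
      sq_sum_le_card_mul_sum_sq
    have h4 : (∑ j ∈ Sfin, |(u - v) j| ^ 2) ≤ Dsq := by
      rw [hDsq]
      have habs : ∀ j, |(u - v) j| ^ 2 = (u - v) j ^ 2 := fun j => sq_abs _
      rw [Finset.sum_congr rfl fun j _ => habs j]
      exact Finset.sum_le_sum_of_subset_of_nonneg (Finset.subset_univ _)
        (fun i _ _ => sq_nonneg _)
    have hcard : (Sfin.card : ℝ) ≤ (K : ℝ) := by
      have hsub : Sfin ⊆ Finset.univ.filter (fun j => u j ≠ 0) := by
        intro j hj
        rw [hSfin, Finset.mem_filter] at hj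
        rw [Finset.mem_filter]
        exact ⟨hj.1, hj.2.1⟩
      have hcard1 : ({i | u i ≠ 0}).ncard = (Finset.univ.filter (fun j => u j ≠ 0)).card := by
        rw [Set.ncard_eq_toFinset_card']
        congr 1
        ext i
        simp
      have hle := Finset.card_le_card hsub
      have hK2 : (Finset.univ.filter (fun j => u j ≠ 0)).card ≤ K := by
        rw [← hcard1]; exact huK
      exact_mod_cast le_trans hle hK2
    have hnn : 0 ≤ ∑ j ∈ Sfin, |(u - v) j| := Finset.sum_nonneg fun j _ => abs_nonneg _
    have h6 : (∑ j ∈ Sfin, |(u - v) j|) ^ 2 ≤ (K : ℝ) * Dsq := by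
      calc (∑ j ∈ Sfin, |(u - v) j|) ^ 2
          ≤ (Sfin.card : ℝ) * ∑ j ∈ Sfin, |(u - v) j| ^ 2 := h3
        _ ≤ (K : ℝ) * Dsq := by
            apply mul_le_mul hcard h4 (Finset.sum_nonneg fun j _ => sq_nonneg _)
              (Nat.cast_nonneg _)
    have h7 : (Real.sqrt K * Dn) ^ 2 = (K : ℝ) * Dsq := by
      rw [mul_pow, Real.sq_sqrt (Nat.cast_nonneg K), hDn_sq]
    have h5 : (∑ j ∈ Sfin, |(u - v) j|) ≤ Real.sqrt K * Dn := by
      have hs1 := Real.sqrt_le_sqrt h6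
      rw [Real.sqrt_sq hnn, Real.sqrt_mul (Nat.cast_nonneg K), ← hDn] at hs1
      exact hs1
    have hcontr : (1 - δ) * Dsq ≤ Real.sqrt K * θ * Dsq := by
      calc (1 - δ) * Dsq ≤ ∑ j ∈ Sfin, (u - v) j * c j := hsplit
        _ ≤ θ * Dn * ∑ j ∈ Sfin, |(u - v) j| := h2
        _ ≤ θ * Dn * (Real.sqrt K * Dn) := mul_le_mul_of_nonneg_left h5 hθDn
        _ = Real.sqrt K * θ * Dn ^ 2 := by ring
        _ = Real.sqrt K * θ * Dsq := by rw [hDn_sq]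
    have := mul_lt_mul_of_pos_right hmain hDsq_pos
    linarith
  obtain ⟨j₀, hj₀S, hj₀⟩ := hex
  rw [hSfin, Finset.mem_filter] at hj₀S
  have hj₀u : u j₀ ≠ 0 := hj₀S.2.1
  have hj₀J : j₀ ∉ J := hj₀S.2.2
  have hdj₀ : (u - v) j₀ = u j₀ := hdz j₀ hj₀J
  have hdj₀ne : (u - v) j₀ ≠ 0 := by rw [hdj₀]; exact hj₀u
  have hdj₀abs : 0 < |(u - v) j₀| := abs_pos.mpr hdj₀ne
  have hprod : 0 < (u - v) j₀ * c j₀ :=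
    lt_of_le_of_lt (mul_nonneg hθDn hdj₀abs.le) hj₀
  have hcabs : θ * Dn < |c j₀| := by
    have h1 : (u - v) j₀ * c j₀ ≤ |(u - v) j₀| * |c j₀| := by
      calc (u - v) j₀ * c j₀ ≤ |(u - v) j₀ * c j₀| := le_abs_self _
        _ = |(u - v) j₀| * |c j₀| := abs_mul _ _
    have h2 : θ * Dn * |(u - v) j₀| < |(u - v) j₀| * |c j₀| := lt_of_lt_of_le hj₀ h1
    nlinarith
  have hbdd : ∀ j : Fin N, BddBelow ((fun t : ℝ => ∑ i, (A.mulVec (u - v) i - t * A i j) ^ 2) ''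
      {t : ℝ | v + t • (Pi.single j (1 : ℝ) : Fin N → ℝ) ∈ P}) := by
    intro j
    refine ⟨0, ?_⟩
    rintro x ⟨t, _, rfl⟩
    exact Finset.sum_nonneg fun i _ => sq_nonneg _
  have hne : ∀ j : Fin N, ((fun t : ℝ => ∑ i, (A.mulVec (u - v) i - t * A i j) ^ 2) ''
      {t : ℝ | v + t • (Pi.single j (1 : ℝ) : Fin N → ℝ) ∈ P}).Nonempty := by
    intro j
    refine ⟨_, ⟨0, ?_, rfl⟩⟩
    simp only [Set.mem_setOf_eq, zero_smul, add_zero]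
    exact hvP
  -- sign information at j₀ and feasibility of t = c j₀
  have hfeas : v + c j₀ • (Pi.single j₀ (1 : ℝ) : Fin N → ℝ) ∈ P := by
    have hvj₀ : v j₀ = 0 := hvz j₀ hj₀J
    rw [hP]
    constructor
    · intro i hiIp
      rw [happ j₀ (c j₀) i]
      by_cases h : i = j₀
      · subst h
        rw [if_pos rfl, hvj₀, zero_add]
        have h1 : 0 < (u - v) i := by
          rw [hdj₀]
          exact lt_of_le_of_ne (huP'.1 i hiIp) (Ne.symm hj₀u)
        rcases mul_pos_iff.mp hprod with ⟨_, hcpos⟩ | ⟨hneg, _⟩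
        · exact hcpos.le
        · linarith
      · rw [if_neg h]; exact hvP'.1 i hiIp
    · intro i hiIm
      rw [happ j₀ (c j₀) i]
      by_cases h : i = j₀
      · subst h
        rw [if_pos rfl, hvj₀, zero_add]
        have h1 : (u - v) i < 0 := by
          rw [hdj₀]
          exact lt_of_le_of_ne (huP'.2 i hiIm) hj₀u
        rcases mul_pos_iff.mp hprod with ⟨hp, _⟩ | ⟨_, hcneg⟩
        · linarith
        · exact hcneg.le
      · rw [if_neg h]; exact hvP'.2 i hiIm
  have hub : fstar A P u v j₀ ≤ R - c j₀ ^ 2 := by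
    have h1 : fstar A P u v j₀ ≤ (fun t : ℝ => ∑ i, (A.mulVec (u - v) i - t * A i j₀) ^ 2)
        (c j₀) := csInf_le (hbdd j₀) (Set.mem_image_of_mem _ hfeas)
    simp only at h1
    rw [hexp j₀ (c j₀)] at h1
    linarith [h1, sq_nonneg (c j₀)]
  have hlb : ∀ j : Fin N, u j = 0 → R - θ ^ 2 * Dsq ≤ fstar A P u v j := by
    intro j hj
    have hjJ : j ∉ J := fun hmem => (hJ.subset hmem) hj
    have hvj : v j = 0 := hvz j hjJ
    obtain ⟨hb1, hb2, hb3⟩ := hb u huP v hvP huK hvK hvu j hj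
    apply le_csInf (hne j)
    rintro x ⟨t, htP, rfl⟩
    simp only []
    rw [hexp j t]
    have hθsq : (θ * Dn) ^ 2 = θ ^ 2 * Dsq := by rw [mul_pow, hDn_sq]
    have hjmem : j ∈ I₁ ∪ Ip ∪ Im := by rw [hun]; exact Set.mem_univ j
    rcases hjmem with (h1 | h1) | h1
    · have hcb := hb1 h1
      rw [hdot j, ← hDsq, ← hDn] at hcb
      have habs := abs_le.mp hcb
      have hc2 : c j ^ 2 ≤ (θ * Dn) ^ 2 := sq_le_sq' habs.1 habs.2
      rw [hθsq] at hc2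
      linarith [sq_nonneg (t - c j), hc2]
    · have ht0 : 0 ≤ t := by
        rw [hP] at htP
        have h2 := htP.1 j h1
        rw [happ j t j, if_pos rfl, hvj, zero_add] at h2
        exact h2
      have hcb := hb2 h1
      rw [hdot j, ← hDsq, ← hDn] at hcb
      have hmx : c j ≤ θ * Dn := le_trans (le_max_left _ _) hcb
      have hθD2 : 0 ≤ θ ^ 2 * Dsq := mul_nonneg (sq_nonneg θ) hDsq_pos.le
      rcases le_or_gt (c j) 0 with hc0 | hc0
      · have hcc : t * c j ≤ 0 := mul_nonpos_of_nonneg_of_nonpos ht0 hc0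
        linarith [sq_nonneg t]
      · have hc2 : c j ^ 2 ≤ (θ * Dn) ^ 2 := sq_le_sq' (by linarith) hmx
        rw [hθsq] at hc2
        linarith [sq_nonneg (t - c j)]
    · have ht0 : t ≤ 0 := by
        rw [hP] at htP
        have h2 := htP.2 j h1
        rw [happ j t j, if_pos rfl, hvj, zero_add] at h2
        exact h2
      have hcb := hb3 h1
      rw [hdot j, ← hDsq, ← hDn] at hcb
      have hmx : -(c j) ≤ θ * Dn := le_trans (le_max_left _ _) hcb
      have hθD2 : 0 ≤ θ ^ 2 * Dsq := mul_nonneg (sq_nonneg θ) hDsq_pos.le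
      rcases le_or_gt 0 (c j) with hc0 | hc0
      · have hcc : t * c j ≤ 0 := mul_nonpos_of_nonpos_of_nonneg ht0 hc0
        linarith [sq_nonneg t]
      · have hc2 : c j ^ 2 ≤ (θ * Dn) ^ 2 := sq_le_sq' (by linarith) (by linarith)
        rw [hθsq] at hc2
        linarith [sq_nonneg (t - c j)]
  refine ⟨j₀, ⟨hj₀u, hj₀J⟩, ?_⟩
  intro j hj
  have hstrict : θ ^ 2 * Dsq < c j₀ ^ 2 := by
    have h := pow_lt_pow_left₀ hcabs hθDn two_ne_zero
    rw [sq_abs, mul_pow, hDn_sq] at h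
    linarith
  have := hlb j hj
  linarith [hub]
end

section
/- Let ℐ₁, ℐ₊, ℐ₋ be pairwise disjoint index sets whose union is {1,…,N}, and let K ∈ ℕ. Suppose a matrix A⋄ ∈ ℝ^{m×N} admits constants δ̂_K(A⋄) ∈ (0,1) and θ̂_K(A⋄) > 0 such that (1 − δ̂_K(A⋄))·‖x‖₂² ≤ ‖A⋄ x‖₂² for all x ∈ Σ_K, and max( max_{j ∈ ℐ₁} |⟨A⋄ x, A⋄_{•j}⟩|, max_{j ∈ ℐ₊} (⟨A⋄ x, A⋄_{•j}⟩)₊, max_{j ∈ ℐ₋} (⟨A⋄ x, A⋄_{•j}⟩)₋ ) ≤ θ̂_K(A⋄)·‖x‖₂ for all x ∈ Σ_K, with 1 − δ̂_K(A⋄) > √K · θ̂_K(A⋄). Then there exists η > 0 such that every A ∈ ℝ^{m×N} with ‖A − A⋄‖₂ < η (spectral norm) admits constants δ̂_K(A) ∈ (0,1) and θ̂_K(A) > 0 satisfying the same two inequality conditions (with A in place of A⋄) and 1 − δ̂_K(A) > √K · θ̂_K(A). -/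
open Matrix Set

/-- The spectral (operator 2-) norm of a real matrix. -/
noncomputable def specNorm {m N : ℕ} (A : Matrix (Fin m) (Fin N) ℝ) : ℝ :=
  sSup ((fun x : Fin N → ℝ => Real.sqrt (∑ i, (A.mulVec x) i ^ 2)) ''
    {x : Fin N → ℝ | ∑ i, x i ^ 2 ≤ 1})

/-!
`specNorm` is the ℓ²-operator norm; write `ε = ‖A - A₀‖`. By the triangle inequality
`‖A x‖ ≥ (√(1 - δ₀) - ε) ‖x‖`, and the correlations `⟨A x, A e_j⟩` differ from those of `A₀` by at
most `ε (2 ‖A₀‖ + ε) ‖x‖`; since `|·|`, `(·)₊` and `(·)₋` are 1-Lipschitz, the constants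
`δ = 1 - (√(1 - δ₀) - ε)²` and `θ = θ₀ + ε (2 ‖A₀‖ + ε)` work for `A`. They depend continuously
on `ε`, and at `ε = 0` they satisfy `1 - δ > √K θ` strictly, hence also for all small `ε`.
-/

open scoped Matrix.Norms.L2Operator RealInnerProductSpace
open WithLp

theorem abs_inner_sub_inner_le {F : Type*} [NormedAddCommGroup F] [InnerProductSpace ℝ F]
    (u v u₀ v₀ : F) : |⟪u, v⟫ - ⟪u₀, v₀⟫| ≤ ‖u - u₀‖ * ‖v‖ + ‖u₀‖ * ‖v - v₀‖ := by
  have hsplit : ⟪u, v⟫ - ⟪u₀, v₀⟫ = ⟪u - u₀, v⟫ + ⟪u₀, v - v₀⟫ := by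
    rw [inner_sub_left, inner_sub_right]; ring
  rw [hsplit]
  exact (abs_add_le _ _).trans
    (add_le_add (abs_real_inner_le_norm _ _) (abs_real_inner_le_norm _ _))

theorem EuclideanSpace.norm_toLp_eq_sqrt {n : Type*} [Fintype n] (x : n → ℝ) :
    ‖toLp 2 x‖ = √(∑ i, x i ^ 2) := by
  simp [EuclideanSpace.norm_eq]

theorem EuclideanSpace.norm_toLp_sq {n : Type*} [Fintype n] (x : n → ℝ) :
    ‖toLp 2 x‖ ^ 2 = ∑ i, x i ^ 2 := by
  simpa using EuclideanSpace.real_norm_sq_eq (toLp 2 x)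

theorem specNorm_eq_l2_opNorm {m N : ℕ} (A : Matrix (Fin m) (Fin N) ℝ) : specNorm A = ‖A‖ := by
  have hball : Metric.closedBall (0 : EuclideanSpace ℝ (Fin N)) 1 =
      toLp 2 '' {x : Fin N → ℝ | ∑ i, x i ^ 2 ≤ 1} := by
    ext ⟨x⟩
    simp [EuclideanSpace.norm_toLp_eq_sqrt]
  rw [specNorm, l2_opNorm_def, ← ContinuousLinearMap.sSup_unitClosedBall_eq_norm, hball,
    Set.image_image]
  congr! 2 with x
  exact (EuclideanSpace.norm_toLp_eq_sqrt (A *ᵥ x)).symm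

namespace Matrix

variable {m n : Type*} [Fintype m] [Fintype n] [DecidableEq n]

theorem norm_toLp_mulVec_le (A : Matrix m n ℝ) (x : n → ℝ) :
    ‖toLp 2 (A *ᵥ x)‖ ≤ ‖A‖ * ‖toLp 2 x‖ :=
  l2_opNorm_mulVec A (toLp 2 x)

theorem abs_mulVec_dotProduct_mulVec_sub_le (A A₀ : Matrix m n ℝ) (x y : n → ℝ) :
    |A *ᵥ x ⬝ᵥ A *ᵥ y - A₀ *ᵥ x ⬝ᵥ A₀ *ᵥ y| ≤
      ‖A - A₀‖ * (2 * ‖A₀‖ + ‖A - A₀‖) * ‖toLp 2 x‖ * ‖toLp 2 y‖ := by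
  have hdot (B C : Matrix m n ℝ) :
      B *ᵥ x ⬝ᵥ C *ᵥ y = ⟪toLp 2 (B *ᵥ x), toLp 2 (C *ᵥ y)⟫ := by
    rw [EuclideanSpace.inner_toLp_toLp, star_trivial, dotProduct_comm]
  have hdiff (z : n → ℝ) : toLp 2 (A *ᵥ z) - toLp 2 (A₀ *ᵥ z) = toLp 2 ((A - A₀) *ᵥ z) := by
    rw [sub_mulVec, WithLp.toLp_sub]
  have hx := norm_toLp_mulVec_le (A - A₀) x
  have hy := norm_toLp_mulVec_le (A - A₀) y
  have hx₀ := norm_toLp_mulVec_le A₀ x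
  have hy₀ := norm_toLp_mulVec_le A₀ y
  have hAy : ‖toLp 2 (A *ᵥ y)‖ ≤ (‖A₀‖ + ‖A - A₀‖) * ‖toLp 2 y‖ := by
    calc ‖toLp 2 (A *ᵥ y)‖ ≤ ‖toLp 2 (A₀ *ᵥ y)‖ + ‖toLp 2 ((A - A₀) *ᵥ y)‖ := by
          rw [← hdiff]; exact norm_le_norm_add_norm_sub' _ _
      _ ≤ _ := by linarith
  rw [hdot, hdot]
  refine (abs_inner_sub_inner_le _ _ _ _).trans ?_
  rw [hdiff, hdiff]
  calc _ ≤ (‖A - A₀‖ * ‖toLp 2 x‖) * ((‖A₀‖ + ‖A - A₀‖) * ‖toLp 2 y‖)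
        + (‖A₀‖ * ‖toLp 2 x‖) * (‖A - A₀‖ * ‖toLp 2 y‖) := by gcongr
    _ = _ := by ring

theorem sq_sub_mul_sum_sq_le_sum_sq_mulVec {A A₀ : Matrix m n ℝ} {x : n → ℝ} {s : ℝ}
    (hs : ‖A - A₀‖ ≤ s) (h : s ^ 2 * ∑ i, x i ^ 2 ≤ ∑ i, (A₀ *ᵥ x) i ^ 2) :
    (s - ‖A - A₀‖) ^ 2 * ∑ i, x i ^ 2 ≤ ∑ i, (A *ᵥ x) i ^ 2 := by
  simp only [← EuclideanSpace.norm_toLp_sq, ← mul_pow] at h ⊢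
  have hs₀ : 0 ≤ s := (norm_nonneg _).trans hs
  have hlow : s * ‖toLp 2 x‖ ≤ ‖toLp 2 (A₀ *ᵥ x)‖ :=
    (pow_le_pow_iff_left₀ (by positivity) (norm_nonneg _) two_ne_zero).mp h
  have hsub : ‖toLp 2 (A₀ *ᵥ x)‖ ≤ ‖toLp 2 (A *ᵥ x)‖ + ‖A - A₀‖ * ‖toLp 2 x‖ := by
    calc ‖toLp 2 (A₀ *ᵥ x)‖ ≤ ‖toLp 2 (A *ᵥ x)‖ + ‖toLp 2 ((A - A₀) *ᵥ x)‖ := by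
          rw [sub_mulVec, WithLp.toLp_sub]; exact norm_le_norm_add_norm_sub _ _
      _ ≤ _ := by gcongr; exact norm_toLp_mulVec_le _ _
  exact pow_le_pow_left₀ (mul_nonneg (sub_nonneg.mpr hs) (norm_nonneg _)) (by linarith) 2

end Matrix

-- The condition defining `θ̂_K(A)`, at a single vector `x`.
def ColumnCorrelationBound {m n : Type*} [Fintype m] [Fintype n] (I₁ Ip Im : Set n)
    (A : Matrix m n ℝ) (θ : ℝ) (x : n → ℝ) : Prop :=
  ∀ j : n,
    (j ∈ I₁ → |A.mulVec x ⬝ᵥ (fun k => A k j)| ≤ θ * Real.sqrt (∑ i, x i ^ 2)) ∧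
    (j ∈ Ip → max (A.mulVec x ⬝ᵥ (fun k => A k j)) 0 ≤ θ * Real.sqrt (∑ i, x i ^ 2)) ∧
    (j ∈ Im → max (-(A.mulVec x ⬝ᵥ (fun k => A k j))) 0 ≤ θ * Real.sqrt (∑ i, x i ^ 2))

theorem ColumnCorrelationBound.perturb {m n : Type*} [Fintype m] [Fintype n] [DecidableEq n]
    {I₁ Ip Im : Set n} {A₀ : Matrix m n ℝ} {θ : ℝ} {x : n → ℝ}
    (h : ColumnCorrelationBound I₁ Ip Im A₀ θ x) (A : Matrix m n ℝ) :
    ColumnCorrelationBound I₁ Ip Im A (θ + ‖A - A₀‖ * (2 * ‖A₀‖ + ‖A - A₀‖)) x := by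
  intro j
  obtain ⟨h₁, hp, hm⟩ := h j
  have hcol (B : Matrix m n ℝ) : (fun k => B k j) = B *ᵥ Pi.single j 1 :=
    (mulVec_single_one B j).symm
  have hclose := abs_mulVec_dotProduct_mulVec_sub_le A A₀ x (Pi.single j 1)
  rw [← hcol, ← hcol, PiLp.toLp_single, PiLp.norm_single, norm_one, mul_one,
    EuclideanSpace.norm_toLp_eq_sqrt] at hclose
  set a := A *ᵥ x ⬝ᵥ fun k => A k j
  set a₀ := A₀ *ᵥ x ⬝ᵥ fun k => A₀ k j
  refine ⟨fun hj => ?_, fun hj => ?_, fun hj => ?_⟩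
  · linarith [h₁ hj, abs_sub_abs_le_abs_sub a a₀]
  · linarith [hp hj, le_abs_self (max a 0 - max a₀ 0), abs_max_sub_max_le_abs a a₀ 0]
  · have := abs_max_sub_max_le_abs (-a) (-a₀) 0
    rw [neg_sub_neg, abs_sub_comm a₀] at this
    linarith [hm hj, le_abs_self (max (-a) 0 - max (-a₀) 0)]

theorem stmt_19_general {N m K : ℕ}
    (I₁ Ip Im : Set (Fin N))
    (A₀ : Matrix (Fin m) (Fin N) ℝ) (δ₀ θ₀ : ℝ)
    (hδ₀0 : 0 < δ₀) (hδ₀1 : δ₀ < 1) (hθ₀ : 0 < θ₀)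
    (hRI : ∀ x : Fin N → ℝ, {i | x i ≠ 0}.ncard ≤ K →
      (1 - δ₀) * (∑ i, x i ^ 2) ≤ ∑ i, (A₀.mulVec x) i ^ 2)
    (hRO : ∀ x : Fin N → ℝ, {i | x i ≠ 0}.ncard ≤ K → ∀ j : Fin N,
      (j ∈ I₁ → |A₀.mulVec x ⬝ᵥ (fun k => A₀ k j)| ≤ θ₀ * Real.sqrt (∑ i, x i ^ 2)) ∧
      (j ∈ Ip → max (A₀.mulVec x ⬝ᵥ (fun k => A₀ k j)) 0 ≤ θ₀ * Real.sqrt (∑ i, x i ^ 2)) ∧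
      (j ∈ Im → max (-(A₀.mulVec x ⬝ᵥ (fun k => A₀ k j))) 0 ≤ θ₀ * Real.sqrt (∑ i, x i ^ 2)))
    (hmain : 1 - δ₀ > Real.sqrt K * θ₀) :
    ∃ η > 0, ∀ A : Matrix (Fin m) (Fin N) ℝ, specNorm (A - A₀) < η →
      ∃ δ θ : ℝ, 0 < δ ∧ δ < 1 ∧ 0 < θ ∧
        (∀ x : Fin N → ℝ, {i | x i ≠ 0}.ncard ≤ K →
          (1 - δ) * (∑ i, x i ^ 2) ≤ ∑ i, (A.mulVec x) i ^ 2) ∧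
        (∀ x : Fin N → ℝ, {i | x i ≠ 0}.ncard ≤ K → ∀ j : Fin N,
          (j ∈ I₁ → |A.mulVec x ⬝ᵥ (fun k => A k j)| ≤ θ * Real.sqrt (∑ i, x i ^ 2)) ∧
          (j ∈ Ip → max (A.mulVec x ⬝ᵥ (fun k => A k j)) 0 ≤ θ * Real.sqrt (∑ i, x i ^ 2)) ∧
          (j ∈ Im → max (-(A.mulVec x ⬝ᵥ (fun k => A k j))) 0 ≤ θ * Real.sqrt (∑ i, x i ^ 2))) ∧
        1 - δ > Real.sqrt K * θ := by
  set s₀ := √(1 - δ₀)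
  have hs₀ : s₀ ^ 2 = 1 - δ₀ := Real.sq_sqrt (by linarith)
  set U := {ε : ℝ | ε < s₀ ∧ (s₀ - ε) ^ 2 < 1 ∧
    √K * (θ₀ + ε * (2 * ‖A₀‖ + ε)) < (s₀ - ε) ^ 2}
  have hU : IsOpen U :=
    (isOpen_lt (by fun_prop) (by fun_prop)).and
      ((isOpen_lt (by fun_prop) (by fun_prop)).and (isOpen_lt (by fun_prop) (by fun_prop)))
  -- At `ε = 0` these are hypotheses on `A₀`, so every small enough `ε = ‖A - A₀‖` is admissible.
  have hU₀ : (0 : ℝ) ∈ U := by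
    refine ⟨Real.sqrt_pos.mpr (by linarith), ?_, ?_⟩ <;>
      simp only [sub_zero, zero_mul, add_zero, hs₀] <;> linarith
  obtain ⟨η, hη, hball⟩ := Metric.isOpen_iff.mp hU 0 hU₀
  refine ⟨η, hη, fun A hA => ?_⟩
  rw [specNorm_eq_l2_opNorm] at hA
  obtain ⟨hs, hlt, hgap⟩ : ‖A - A₀‖ ∈ U := hball (by simpa using hA)
  refine ⟨1 - (s₀ - ‖A - A₀‖) ^ 2, θ₀ + ‖A - A₀‖ * (2 * ‖A₀‖ + ‖A - A₀‖), by linarith,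
    by linarith [pow_pos (sub_pos.mpr hs) 2], by positivity, fun x hx => ?_,
    fun x hx => ColumnCorrelationBound.perturb (hRO x hx) A, by rwa [sub_sub_cancel]⟩
  rw [sub_sub_cancel]
  exact sq_sub_mul_sum_sq_le_sum_sq_mulVec hs.le (hs₀ ▸ hRI x hx)

/-- Proposition 6.4: the condition `1 − δ̂_K(A) > √K · θ̂_K(A)` is stable under small
spectral-norm perturbations of the matrix. -/
theorem stmt_19 {N m K : ℕ}
    (I₁ Ip Im : Set (Fin N))
    (hd₁ : Disjoint I₁ Ip) (hd₂ : Disjoint I₁ Im) (hd₃ : Disjoint Ip Im)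
    (hun : I₁ ∪ Ip ∪ Im = Set.univ)
    (A₀ : Matrix (Fin m) (Fin N) ℝ) (δ₀ θ₀ : ℝ)
    (hδ₀0 : 0 < δ₀) (hδ₀1 : δ₀ < 1) (hθ₀ : 0 < θ₀)
    (hRI : ∀ x : Fin N → ℝ, {i | x i ≠ 0}.ncard ≤ K →
      (1 - δ₀) * (∑ i, x i ^ 2) ≤ ∑ i, (A₀.mulVec x) i ^ 2)
    (hRO : ∀ x : Fin N → ℝ, {i | x i ≠ 0}.ncard ≤ K → ∀ j : Fin N,
      (j ∈ I₁ → |A₀.mulVec x ⬝ᵥ (fun k => A₀ k j)| ≤ θ₀ * Real.sqrt (∑ i, x i ^ 2)) ∧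
      (j ∈ Ip → max (A₀.mulVec x ⬝ᵥ (fun k => A₀ k j)) 0 ≤ θ₀ * Real.sqrt (∑ i, x i ^ 2)) ∧
      (j ∈ Im → max (-(A₀.mulVec x ⬝ᵥ (fun k => A₀ k j))) 0 ≤ θ₀ * Real.sqrt (∑ i, x i ^ 2)))
    (hmain : 1 - δ₀ > Real.sqrt K * θ₀) :
    ∃ η > 0, ∀ A : Matrix (Fin m) (Fin N) ℝ, specNorm (A - A₀) < η →
      ∃ δ θ : ℝ, 0 < δ ∧ δ < 1 ∧ 0 < θ ∧
        (∀ x : Fin N → ℝ, {i | x i ≠ 0}.ncard ≤ K →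
          (1 - δ) * (∑ i, x i ^ 2) ≤ ∑ i, (A.mulVec x) i ^ 2) ∧
        (∀ x : Fin N → ℝ, {i | x i ≠ 0}.ncard ≤ K → ∀ j : Fin N,
          (j ∈ I₁ → |A.mulVec x ⬝ᵥ (fun k => A k j)| ≤ θ * Real.sqrt (∑ i, x i ^ 2)) ∧
          (j ∈ Ip → max (A.mulVec x ⬝ᵥ (fun k => A k j)) 0 ≤ θ * Real.sqrt (∑ i, x i ^ 2)) ∧
          (j ∈ Im → max (-(A.mulVec x ⬝ᵥ (fun k => A k j))) 0 ≤ θ * Real.sqrt (∑ i, x i ^ 2))) ∧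
        1 - δ > Real.sqrt K * θ :=
  stmt_19_general I₁ Ip Im A₀ δ₀ θ₀ hδ₀0 hδ₀1 hθ₀ hRI hRO hmain
end
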